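/- arXiv:2511.04815 — 5 statements merged into one kernel-verified Lean document; each statement's English description precedes it below -/
import Mathlib

section
/- The number of Dyck words of semilength n avoiding the factor UUU equals the Motzkin number M_n = sum over j of binom(n,2j)·C_j, where C_j is the j-th Catalan number. -/
/-- A Dyck word of semilength `n`. -/
def IsDyckWord (n : ℕ) (l : List Bool) : Prop :=
  l.count true = n ∧ l.count false = n ∧
    ∀ p : List Bool, p <+: l → p.count false ≤ p.count true

/-!
Replacing each up step of a Motzkin path by `UUD`, each level step by `UD` and each down step by
`D` is a bijection from Motzkin paths of length `n` onto the `UUU`-avoiding Dyck words of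
semilength `n`; its inverse greedily cuts a word into the blocks `D`, `UD`, `UUD`. A Motzkin path
with `j` up steps is determined by the positions of its `2 j` non-level steps and the Dyck word of
semilength `j` they spell, so there are `C(n, 2j) C_j` of them.
-/

open List

lemma IsDyckWord.two_mul_eq_length {n : ℕ} {w : List Bool} (hw : IsDyckWord n w) :
    2 * n = w.length := by
  rw [← count_true_add_count_false, hw.1, hw.2.1, two_mul]

lemma IsDyckWord.not_suffix_true {n : ℕ} {w : List Bool} (hw : IsDyckWord n w) :
    ¬ [true] <:+ w := by
  rintro ⟨p, rfl⟩
  have hprefix := hw.2.2 p (prefix_append _ _)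
  have hbalance := hw.1.trans hw.2.1.symm
  simp [count_append] at hbalance
  omega

namespace MotzkinDyck

def boolEquivDyckStep : Bool ≃ DyckStep where
  toFun b := if b then .U else .D
  invFun s := s = .U
  left_inv b := by cases b <;> rfl
  right_inv s := by cases s <;> rfl

@[simp] lemma count_U_map_boolEquivDyckStep (w : List Bool) :
    (w.map boolEquivDyckStep).count .U = w.count true :=
  count_map_of_injective _ _ boolEquivDyckStep.injective true

@[simp] lemma count_D_map_boolEquivDyckStep (w : List Bool) :
    (w.map boolEquivDyckStep).count .D = w.count false :=
  count_map_of_injective _ _ boolEquivDyckStep.injective false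

@[simp] lemma count_true_map_boolEquivDyckStep_symm (p : List DyckStep) :
    (p.map boolEquivDyckStep.symm).count true = p.count .U :=
  count_map_of_injective _ _ boolEquivDyckStep.symm.injective .U

@[simp] lemma count_false_map_boolEquivDyckStep_symm (p : List DyckStep) :
    (p.map boolEquivDyckStep.symm).count false = p.count .D :=
  count_map_of_injective _ _ boolEquivDyckStep.symm.injective .D

def isDyckWordEquiv (n : ℕ) :
    {w : List Bool // IsDyckWord n w} ≃ {p : DyckWord // p.semilength = n} where
  toFun w :=
    ⟨⟨w.1.map boolEquivDyckStep, by simp [w.2.1, w.2.2.1], fun i => by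
        simpa [← map_take] using w.2.2.2 _ (take_prefix i _)⟩,
      by simpa [DyckWord.semilength] using w.2.1⟩
  invFun p := ⟨p.1.toList.map boolEquivDyckStep.symm, by
    obtain ⟨p, rfl⟩ := p
    refine ⟨by simp [DyckWord.semilength], by simp [← p.count_U_eq_count_D, DyckWord.semilength],
      fun q hq => ?_⟩
    rw [prefix_iff_eq_take.1 hq, ← map_take, count_true_map_boolEquivDyckStep_symm,
      count_false_map_boolEquivDyckStep_symm]
    exact p.count_D_le_count_U _⟩
  left_inv w := Subtype.ext <| by simp
  right_inv p := Subtype.ext <| DyckWord.ext <| by simp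

lemma card_isDyckWord (n : ℕ) : Nat.card {w : List Bool // IsDyckWord n w} = catalan n := by
  rw [Nat.card_congr (isDyckWordEquiv n), Nat.card_eq_fintype_card,
    DyckWord.card_dyckWord_semilength_eq_catalan]

lemma setOf_length_eq_count_true_eq_zero (n : ℕ) :
    {l : List Bool | l.length = n ∧ l.count true = 0} = {replicate n false} := by
  ext l
  simp [count_eq_zero, eq_replicate_iff]

lemma setOf_length_eq_succ_count_true_eq_succ (n k : ℕ) :
    {l : List Bool | l.length = n + 1 ∧ l.count true = k + 1} =
      cons true '' {l | l.length = n ∧ l.count true = k} ∪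
        cons false '' {l | l.length = n ∧ l.count true = k + 1} := by
  ext (_ | ⟨_ | _, l⟩) <;> simp

lemma ncard_length_eq_count_true_eq (n k : ℕ) :
    {l : List Bool | l.length = n ∧ l.count true = k}.ncard = n.choose k := by
  induction n generalizing k with
  | zero =>
    cases k with
    | zero => rw [setOf_length_eq_count_true_eq_zero, Set.ncard_singleton, Nat.choose_zero_right]
    | succ k =>
      rw [Nat.choose_zero_succ, ← Set.ncard_empty (List Bool)]
      congr 1
      exact Set.eq_empty_of_forall_notMem fun l ⟨hl, hk⟩ => by simp_all [length_eq_zero_iff]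
  | succ n ih =>
    cases k with
    | zero => simp [setOf_length_eq_count_true_eq_zero]
    | succ k =>
      have hfinite (k : ℕ) : {l : List Bool | l.length = n ∧ l.count true = k}.Finite :=
        (finite_length_eq Bool n).subset fun _ hl => hl.1
      rw [setOf_length_eq_succ_count_true_eq_succ, Set.ncard_union_eq ?disj
        ((hfinite k).image _) ((hfinite (k + 1)).image _),
        Set.ncard_image_of_injective _ cons_injective,
        Set.ncard_image_of_injective _ cons_injective, ih, ih, Nat.choose_succ_succ]
      case disj =>
        exact Set.disjoint_left.2 fun _ ⟨_, _, h⟩ ⟨_, _, h'⟩ => by cases h.trans h'.symm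

section Interleave

variable {α : Type*}

def interleave : List Bool → List α → List (Option α)
  | [], _ => []
  | false :: mask, w => none :: interleave mask w
  | true :: _, [] => []
  | true :: mask, a :: w => some a :: interleave mask w

lemma map_isSome_interleave {mask : List Bool} {w : List α} (h : mask.count true = w.length) :
    (interleave mask w).map Option.isSome = mask := by
  induction mask, w using interleave.induct <;> simp_all [interleave]

lemma reduceOption_interleave {mask : List Bool} {w : List α} (h : mask.count true = w.length) :
    (interleave mask w).reduceOption = w := by
  induction mask, w using interleave.induct <;> simp_all [interleave, eq_comm (a := 0)]

lemma interleave_map_isSome_reduceOption (m : List (Option α)) :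
    interleave (m.map Option.isSome) m.reduceOption = m := by
  induction m with
  | nil => rfl
  | cons x m ih => cases x <;> simp [interleave, ih]

lemma count_true_map_isSome (m : List (Option α)) :
    (m.map Option.isSome).count true = m.reduceOption.length := by
  induction m with
  | nil => rfl
  | cons x m ih => cases x <;> simp [ih]

lemma count_reduceOption [DecidableEq α] (m : List (Option α)) (a : α) :
    m.reduceOption.count a = m.count (some a) := by
  induction m with
  | nil => rfl
  | cons x m ih => cases x <;> simp [count_cons, ih]

lemma exists_prefix_reduceOption_eq {m : List (Option α)} {q : List α}
    (h : q <+: m.reduceOption) : ∃ p, p <+: m ∧ p.reduceOption = q := by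
  obtain ⟨t, ht⟩ := h
  obtain ⟨p, s, rfl, hp, -⟩ := (reduceOption_eq_append_iff _ _ _).1 ht.symm
  exact ⟨p, prefix_append p s, hp⟩

end Interleave

/-- The steps `some true`, `some false` and `none` are up, down and level steps. -/
def IsMotzkinWord (n : ℕ) (m : List (Option Bool)) : Prop :=
  m.length = n ∧ m.count (some true) = m.count (some false) ∧
    ∀ p, p <+: m → p.count (some false) ≤ p.count (some true)

lemma isMotzkinWord_iff {n : ℕ} {m : List (Option Bool)} :
    IsMotzkinWord n m ↔ m.length = n ∧ IsDyckWord (m.count (some true)) m.reduceOption := by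
  simp only [IsMotzkinWord, IsDyckWord, count_reduceOption]
  constructor
  · rintro ⟨hn, hUD, hprefix⟩
    refine ⟨hn, trivial, hUD.symm, fun q hq => ?_⟩
    obtain ⟨p, hp, rfl⟩ := exists_prefix_reduceOption_eq hq
    simpa only [count_reduceOption] using hprefix p hp
  · rintro ⟨hn, -, hDU, hprefix⟩
    refine ⟨hn, hDU.symm, fun p hp => ?_⟩
    have hq : p.reduceOption <+: m.reduceOption := hp.filterMap id
    simpa only [count_reduceOption] using hprefix _ hq

def isMotzkinWordEquiv (n j : ℕ) :
    {m // IsMotzkinWord n m ∧ m.count (some true) = j} ≃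
      {mask : List Bool // mask.length = n ∧ mask.count true = 2 * j} ×
        {w : List Bool // IsDyckWord j w} where
  toFun m :=
    have hw : IsDyckWord j m.1.reduceOption := by
      obtain ⟨m, hm, rfl⟩ := m
      exact (isMotzkinWord_iff.1 hm).2
    (⟨m.1.map Option.isSome, by simpa using (isMotzkinWord_iff.1 m.2.1).1, by
        rw [count_true_map_isSome, hw.two_mul_eq_length]⟩, ⟨m.1.reduceOption, hw⟩)
  invFun x :=
    ⟨interleave x.1.1 x.2.1, by
      obtain ⟨⟨mask, hlen, hmask⟩, ⟨w, hw⟩⟩ := x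
      have hx : mask.count true = w.length := hmask.trans hw.two_mul_eq_length
      have hj : (interleave mask w).count (some true) = j := by
        rw [← count_reduceOption, reduceOption_interleave hx, hw.1]
      refine ⟨isMotzkinWord_iff.2 ⟨?_, ?_⟩, hj⟩
      · rw [← length_map (f := Option.isSome), map_isSome_interleave hx, hlen]
      · rwa [hj, reduceOption_interleave hx]⟩
  left_inv m := Subtype.ext (interleave_map_isSome_reduceOption m.1)
  right_inv x := by
    have hx := x.1.2.2.trans x.2.2.two_mul_eq_length
    ext1 <;> ext1
    · exact map_isSome_interleave hx
    · exact reduceOption_interleave hx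

def isMotzkinWordSigmaEquiv (n : ℕ) :
    {m // IsMotzkinWord n m} ≃
      Σ j : Fin (n + 1), {m // IsMotzkinWord n m ∧ m.count (some true) = j} where
  toFun m :=
    ⟨⟨m.1.count (some true), Nat.lt_succ_of_le (count_le_length.trans_eq m.2.1)⟩, m.1, m.2, rfl⟩
  invFun x := ⟨x.2.1, x.2.2.1⟩
  left_inv _ := rfl
  right_inv := by
    rintro ⟨⟨j, _⟩, m, _, hmj : m.count (some true) = j⟩
    subst hmj
    rfl

lemma card_isMotzkinWord (n : ℕ) :
    Nat.card {m // IsMotzkinWord n m} =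
      ∑ j ∈ Finset.range (n + 1), n.choose (2 * j) * catalan j := by
  have (j : Fin (n + 1)) : Finite {m // IsMotzkinWord n m ∧ m.count (some true) = j} :=
    ((finite_length_eq _ n).subset fun _ hm => hm.1.1).to_subtype
  rw [Nat.card_congr (isMotzkinWordSigmaEquiv n), Nat.card_sigma, ← Fin.sum_univ_eq_sum_range]
  refine Finset.sum_congr rfl fun j _ => ?_
  rw [Nat.card_congr (isMotzkinWordEquiv n j), Nat.card_prod, card_isDyckWord,
    ← ncard_length_eq_count_true_eq]
  rfl

def encodeStep : Option Bool → List Bool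
  | some true => [true, true, false]
  | none => [true, false]
  | some false => [false]

def encode (m : List (Option Bool)) : List Bool := m.flatMap encodeStep

def decode : List Bool → List (Option Bool)
  | [] => []
  | false :: w => some false :: decode w
  | true :: false :: w => none :: decode w
  | true :: true :: false :: w => some true :: decode w
  | true :: true :: true :: _ => []
  | [true] => []
  | [true, true] => []

@[simp] lemma encode_nil : encode [] = [] := rfl

@[simp] lemma encode_cons (x : Option Bool) (m : List (Option Bool)) :
    encode (x :: m) = encodeStep x ++ encode m := rfl

lemma decode_encode (m : List (Option Bool)) : decode (encode m) = m := by
  induction m with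
  | nil => rfl
  | cons x m ih => rcases x with _ | _ | _ <;> simp [encodeStep, decode, ih]

lemma count_false_encode (m : List (Option Bool)) : (encode m).count false = m.length := by
  induction m with
  | nil => rfl
  | cons x m ih => rcases x with _ | _ | _ <;> simp [encodeStep, ih]

lemma count_true_encode_add_count_some_false (m : List (Option Bool)) :
    (encode m).count true + m.count (some false) = m.length + m.count (some true) := by
  induction m with
  | nil => rfl
  | cons x m ih => rcases x with _ | _ | _ <;> simp [encodeStep] <;> omega

lemma not_infix_encode (m : List (Option Bool)) : ¬ [true, true, true] <:+: encode m := by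
  induction m with
  | nil => simp
  | cons x m ih => rcases x with _ | _ | _ <;> simpa [encodeStep, infix_cons_iff] using ih

lemma false_notMem_of_encodeStep_eq {x : Option Bool} {r s : List Bool} {b : Bool}
    (h : encodeStep x = r ++ b :: s) : false ∉ r := by
  rcases x with _ | _ | _ <;> rcases r with _ | ⟨_, _ | ⟨_, _ | ⟨_, _⟩⟩⟩ <;> simp_all [encodeStep]

lemma exists_prefix_encode_eq_append {m : List (Option Bool)} {q : List Bool}
    (h : q <+: encode m) : ∃ p r, p <+: m ∧ false ∉ r ∧ q = encode p ++ r := by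
  obtain ⟨t, ht⟩ := h
  rcases flatten_eq_append_iff.1 ht.symm with ⟨as, bs, hm, rfl, -⟩ | ⟨as, r, b, s, ds, hm, rfl, -⟩
  · obtain ⟨p, p', rfl, rfl, -⟩ := map_eq_append_iff.1 hm
    exact ⟨p, [], prefix_append p p', by simp, by simp [encode, flatMap]⟩
  · obtain ⟨p, p', rfl, rfl, hp'⟩ := map_eq_append_iff.1 hm
    obtain ⟨x, p', rfl, hx, -⟩ := map_eq_cons_iff.1 hp'
    exact ⟨p, r, prefix_append p _, false_notMem_of_encodeStep_eq hx, by simp [encode, flatMap]⟩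

lemma encode_decode {w : List Bool} (hw : ¬ [true, true, true] <:+: w) (hend : ¬ [true] <:+ w) :
    encode (decode w) = w := by
  induction w using decode.induct with
  | case1 => rfl
  | case2 w ih | case3 w ih | case4 w ih =>
    simp only [decode, encode_cons, encodeStep, cons_append, nil_append]
    rw [ih (fun h => hw (h.trans (by simp [infix_cons_iff])))
      (fun h => hend (h.trans (by simp [suffix_cons_iff])))]
  | case5 w => exact absurd (prefix_append _ w).isInfix hw
  | case6 => exact absurd suffix_rfl hend
  | case7 => exact absurd (suffix_cons _ _) hend

lemma isDyckWord_encode_iff {n : ℕ} {m : List (Option Bool)} :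
    IsDyckWord n (encode m) ↔ IsMotzkinWord n m := by
  have hcount := count_true_encode_add_count_some_false m
  rw [IsDyckWord, IsMotzkinWord, count_false_encode]
  constructor
  · rintro ⟨htrue, rfl, hprefix⟩
    refine ⟨rfl, by omega, fun p hp => ?_⟩
    have hencode := hprefix (encode p) (hp.flatMap encodeStep)
    rw [count_false_encode] at hencode
    have hp_count := count_true_encode_add_count_some_false p
    omega
  · rintro ⟨rfl, hUD, hprefix⟩
    refine ⟨by omega, rfl, fun q hq => ?_⟩
    obtain ⟨p, r, hp, hr, rfl⟩ := exists_prefix_encode_eq_append hq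
    have hp_prefix := hprefix p hp
    have hp_count := count_true_encode_add_count_some_false p
    have hp_le : p.count (some true) ≤ p.length := count_le_length
    simp only [count_append, count_false_encode, count_eq_zero_of_not_mem hr]
    omega

def encodeEquiv (n : ℕ) :
    {m // IsMotzkinWord n m} ≃ {w // IsDyckWord n w ∧ ¬ [true, true, true] <:+: w} where
  toFun m := ⟨encode m, isDyckWord_encode_iff.2 m.2, not_infix_encode m⟩
  invFun w := ⟨decode w, by
    rw [← isDyckWord_encode_iff, encode_decode w.2.2 w.2.1.not_suffix_true]
    exact w.2.1⟩
  left_inv m := Subtype.ext (decode_encode m)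
  right_inv w := Subtype.ext (encode_decode w.2.2 w.2.1.not_suffix_true)

end MotzkinDyck

/-- The number of Dyck words of semilength `n` avoiding the factor `UUU` equals the
Motzkin number `M_n = ∑_j binom(n,2j)·C_j`. -/
theorem stmt_2 (n : ℕ) :
    {l : List Bool | IsDyckWord n l ∧ ¬ [true, true, true] <:+: l}.ncard =
      ∑ j ∈ Finset.range (n + 1), n.choose (2 * j) * catalan j := by
  rw [← Nat.card_coe_set_eq, ← MotzkinDyck.card_isMotzkinWord n]
  exact Nat.card_congr (MotzkinDyck.encodeEquiv n).symm
end

section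
/- For nonnegative integers n and j with 1 ≤ j ≤ n/2 and any k ≥ 0, the number of Dyck-type lattice paths from (0,0) to (n, n-2j) (up steps (1,1), down steps (1,-1), never below the x-axis) having exactly k peaks equals the coefficient of x^k in C(n,j,x) = sum_{m=1}^{j} ((n+1-2j)/m)·binom(n-j,m-1)·binom(j-1,m-1)·x^m. -/
/-- The number of occurrences of `pat` as a (contiguous) factor of `l`. -/
def countFactor (pat l : List Bool) : ℕ :=
  ((List.range l.length).filter fun i => pat.isPrefixOf (l.drop i)).length

/-!
A path is a word in `true` (up) and `false` (down); it stays weakly above the axis iff every prefix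
has at least as many ups as downs. Let `N a b k` count such paths with `a` ups, `b` downs and `k`
peaks. Sorting them by their last step, and a final down step further by the step before it (a final
`UD` closes a peak, a final `DD` does not), gives for `b ≤ a`
  `N (a+1) (b+1) (k+1) + N a b (k+1) = N a (b+1) (k+1) + N a b k + N (a+1) b (k+1)`,
in which the paths of `N (a+1) b (k+1)` that end in a down step have cancelled. The closed form
`(a - b + 1)/k · C(a, k-1) · C(b-1, k-1)` satisfies the same recurrence by Pascal's rule and
`(k+1) C(n, k+1) = (n-k) C(n, k)`, and it agrees with `N` on the boundary `b = 0`, `b = a + 1`,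
`k = 0`.
-/

theorem countFactor_cons (pat : List Bool) (x : Bool) (l : List Bool) :
    countFactor pat (x :: l) = (if pat.isPrefixOf (x :: l) then 1 else 0) + countFactor pat l := by
  unfold countFactor
  rw [List.length_cons, List.range_succ_eq_map, List.filter_cons]
  by_cases h : pat.isPrefixOf (x :: l) <;>
    simp [h, List.filter_map, Function.comp_def, Nat.add_comm]

theorem countFactor_true_false_concat (l : List Bool) (c : Bool) :
    countFactor [true, false] (l ++ [c]) =
      countFactor [true, false] l + if l.getLast? = some true ∧ c = false then 1 else 0 := by
  induction l with
  | nil => cases c <;> decide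
  | cons x l ih =>
    rcases l with _ | ⟨y, l⟩
    · cases x <;> cases c <;> decide
    · have hpeak : [true, false].isPrefixOf (x :: (y :: l ++ [c])) =
          [true, false].isPrefixOf (x :: y :: l) := by
        simp [List.isPrefixOf]
      rw [List.cons_append, countFactor_cons, ih, hpeak, countFactor_cons _ x,
        List.getLast?_cons_cons]
      omega

theorem ncard_eq_ncard_preimage_concat_true_add {T : Set (List Bool)} (hT : T.Finite)
    (hnil : [] ∉ T) :
    T.ncard = ((· ++ [true]) ⁻¹' T).ncard + ((· ++ [false]) ⁻¹' T).ncard := by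
  set ending : Bool → Set (List Bool) := fun c => (· ++ [c]) '' ((· ++ [c]) ⁻¹' T)
  have hsplit : T = ending true ∪ ending false := by
    ext l
    rcases List.eq_nil_or_concat l with rfl | ⟨l, c, rfl⟩
    · simp [ending, hnil]
    · cases c <;> simp [ending]
  have hdisj : Disjoint (ending true) (ending false) := by
    rw [Set.disjoint_left]
    rintro _ ⟨l, -, rfl⟩ ⟨m, -, h⟩
    simpa using congrArg List.getLast? h
  have hfin (c : Bool) : (ending c).Finite :=
    (hT.preimage (List.append_left_injective _).injOn).image _
  conv_lhs => rw [hsplit]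
  rw [Set.ncard_union_eq hdisj (hfin true) (hfin false),
    Set.ncard_image_of_injective _ (List.append_left_injective _),
    Set.ncard_image_of_injective _ (List.append_left_injective _)]

def IsBallot (l : List Bool) : Prop :=
  ∀ p : List Bool, p <+: l → p.count false ≤ p.count true

theorem isBallot_concat_iff {l : List Bool} {c : Bool} :
    IsBallot (l ++ [c]) ↔ IsBallot l ∧ (l ++ [c]).count false ≤ (l ++ [c]).count true := by
  simp only [IsBallot, List.prefix_concat_iff, or_imp, forall_and, forall_eq]
  exact and_comm

theorem IsBallot.countFactor_true_false_pos {l : List Bool} (hl : IsBallot l)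
    (hfalse : false ∈ l) :
    0 < countFactor [true, false] l := by
  induction l using List.reverseRecOn with
  | nil => simp at hfalse
  | append_singleton l c ih =>
    rw [isBallot_concat_iff] at hl
    rw [countFactor_true_false_concat]
    by_cases hfl : false ∈ l
    · have := ih hl.1 hfl
      omega
    obtain rfl : c = false := by simpa [hfl] using hfalse
    rcases List.eq_nil_or_concat l with rfl | ⟨l, x, rfl⟩
    · simpa using hl.2
    obtain rfl : x = true := (by simpa using hfl : false ∉ l ∧ x = true).2
    simp

theorem countFactor_true_false_eq_zero_of_not_mem {l : List Bool} (h : false ∉ l) :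
    countFactor [true, false] l = 0 := by
  induction l using List.reverseRecOn with
  | nil => rfl
  | append_singleton l c ih =>
    simp only [List.mem_append, List.mem_singleton, not_or] at h
    rw [countFactor_true_false_concat, ih h.1]
    simp [Ne.symm h.2]

def ballotPaths (a b k : ℕ) : Set (List Bool) :=
  {l | l.count true = a ∧ l.count false = b ∧ IsBallot l ∧ countFactor [true, false] l = k}

theorem ballotPaths_finite (a b k : ℕ) : (ballotPaths a b k).Finite :=
  (List.finite_length_eq Bool (a + b)).subset fun l ⟨ha, hb, _⟩ => by
    rw [Set.mem_ofPred_eq, ← List.count_true_add_count_false, ha, hb]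

theorem concat_true_mem_ballotPaths_iff {l : List Bool} {a b k : ℕ} :
    l ++ [true] ∈ ballotPaths (a + 1) b k ↔ l ∈ ballotPaths a b k ∧ b ≤ a + 1 := by
  simp only [ballotPaths, Set.mem_ofPred_eq, isBallot_concat_iff, countFactor_true_false_concat,
    List.count_append, List.count_singleton]
  grind

theorem concat_concat_false_mem_ballotPaths_iff {l : List Bool} {c : Bool} {a b k : ℕ} :
    l ++ [c] ++ [false] ∈ ballotPaths a (b + 1) (k + c.toNat) ↔
      l ++ [c] ∈ ballotPaths a b k ∧ b + 1 ≤ a := by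
  simp only [ballotPaths, Set.mem_ofPred_eq, isBallot_concat_iff (l := l ++ [c]),
    countFactor_true_false_concat (l ++ [c]), List.getLast?_concat, List.count_append]
  cases c <;> simp only [List.count_singleton] <;> grind

theorem preimage_concat_true_ballotPaths {a b k : ℕ} (hb : b ≤ a + 1) :
    (· ++ [true]) ⁻¹' ballotPaths (a + 1) b k = ballotPaths a b k :=
  Set.ext fun _ => concat_true_mem_ballotPaths_iff.trans (and_iff_left hb)

theorem nil_not_mem_ballotPaths_succ (a b k : ℕ) : [] ∉ ballotPaths (a + 1) b k :=
  fun h => by simp [ballotPaths] at h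

theorem ncard_ballotPaths_succ_succ {a b : ℕ} (k : ℕ) (hb : b ≤ a) :
    (ballotPaths (a + 1) (b + 1) (k + 1)).ncard + (ballotPaths a b (k + 1)).ncard =
      (ballotPaths a (b + 1) (k + 1)).ncard + (ballotPaths a b k).ncard +
        (ballotPaths (a + 1) b (k + 1)).ncard := by
  set D := (· ++ [false]) ⁻¹' ballotPaths (a + 1) (b + 1) (k + 1)
  have hD_true : (· ++ [true]) ⁻¹' D = ballotPaths a b k := by
    ext l
    simp only [D, Set.mem_preimage]
    refine (concat_concat_false_mem_ballotPaths_iff (c := true)).trans ?_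
    rw [concat_true_mem_ballotPaths_iff, and_assoc, and_iff_left ⟨by omega, by omega⟩]
  have hD_false :
      (· ++ [false]) ⁻¹' D = (· ++ [false]) ⁻¹' ballotPaths (a + 1) b (k + 1) := by
    ext l
    simp only [D, Set.mem_preimage]
    exact (concat_concat_false_mem_ballotPaths_iff (c := false) (k := k + 1)).trans
      (and_iff_left (by omega))
  have hD_nil : [] ∉ D := fun h => by simpa using h.2.2.1 [false] List.prefix_rfl
  have hsplit_succ_succ := ncard_eq_ncard_preimage_concat_true_add (ballotPaths_finite _ _ _)
    (nil_not_mem_ballotPaths_succ a (b + 1) (k + 1))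
  have hsplit_D := ncard_eq_ncard_preimage_concat_true_add
    ((ballotPaths_finite _ _ _).preimage (List.append_left_injective _).injOn) hD_nil
  have hsplit_succ := ncard_eq_ncard_preimage_concat_true_add (ballotPaths_finite _ _ _)
    (nil_not_mem_ballotPaths_succ a b (k + 1))
  rw [preimage_concat_true_ballotPaths (by omega)] at hsplit_succ_succ hsplit_succ
  rw [hD_true, hD_false] at hsplit_D
  omega

theorem ballotPaths_eq_empty_of_lt {a b : ℕ} (k : ℕ) (h : a < b) : ballotPaths a b k = ∅ :=
  Set.eq_empty_of_forall_notMem fun l ⟨ha, hb, hl, _⟩ => by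
    have := hl l List.prefix_rfl
    omega

theorem ballotPaths_succ_zero (a b : ℕ) : ballotPaths a (b + 1) 0 = ∅ :=
  Set.eq_empty_of_forall_notMem fun l ⟨_, hb, hl, hk⟩ => by
    have := hl.countFactor_true_false_pos (List.count_pos_iff.mp (by omega))
    omega

theorem mem_ballotPaths_zero_iff {a k : ℕ} {l : List Bool} :
    l ∈ ballotPaths a 0 k ↔ l = List.replicate a true ∧ k = 0 := by
  constructor
  · rintro ⟨ha, hb, -, rfl⟩
    have hfalse : false ∉ l := List.count_eq_zero.mp hb
    refine ⟨List.eq_replicate_iff.mpr ⟨?_, fun x hx => ?_⟩,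
      countFactor_true_false_eq_zero_of_not_mem hfalse⟩
    · rw [← List.count_true_add_count_false, ha, hb, add_zero]
    · cases x
      · exact absurd hx hfalse
      · rfl
  · rintro ⟨rfl, rfl⟩
    have hfalse : false ∉ List.replicate a true := by simp
    refine ⟨by simp, List.count_eq_zero.mpr hfalse, fun p hp => ?_,
      countFactor_true_false_eq_zero_of_not_mem hfalse⟩
    have := hp.sublist.count_le false
    rw [List.count_eq_zero.mpr hfalse] at this
    omega

theorem ncard_ballotPaths_zero (a k : ℕ) :
    (ballotPaths a 0 k).ncard = if k = 0 then 1 else 0 := by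
  split_ifs with hk
  · rw [Set.ncard_eq_one]
    exact ⟨_, Set.ext fun l => mem_ballotPaths_zero_iff.trans (and_iff_left hk)⟩
  · rw [Set.eq_empty_of_forall_notMem fun l hl => hk (mem_ballotPaths_zero_iff.mp hl).2,
      Set.ncard_empty]

theorem Nat.cast_choose_succ_right {K : Type*} [Field K] [CharZero K] (n k : ℕ) :
    (n.choose (k + 1) : K) = (n - k) / (k + 1) * n.choose k := by
  rcases le_or_gt k n with h | h
  · have := congrArg (Nat.cast : ℕ → K) (Nat.choose_succ_right_eq n k)
    push_cast [Nat.cast_sub h] at this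
    field_simp
    linear_combination this
  · simp [Nat.choose_eq_zero_of_lt h, Nat.choose_eq_zero_of_lt (Nat.lt_succ_of_lt h)]

-- For `b ≥ 1` the value at `k = 0` is `0` because `x / 0 = 0` in `ℚ`.
def peakFormula (a b k : ℕ) : ℚ :=
  if b = 0 then if k = 0 then 1 else 0
  else ((a : ℚ) - b + 1) / k * a.choose (k - 1) * (b - 1).choose (k - 1)

theorem peakFormula_succ_succ (a b k : ℕ) :
    peakFormula (a + 1) (b + 1) (k + 1) + peakFormula a b (k + 1) =
      peakFormula a (b + 1) (k + 1) + peakFormula a b k + peakFormula (a + 1) b (k + 1) := by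
  unfold peakFormula
  rcases b with _ | b
  · rcases k with _ | k <;> simp
  rcases k with _ | k
  · simp only [add_tsub_cancel_right, tsub_self, zero_tsub, Nat.choose_zero_right,
      Nat.add_eq_zero_iff, one_ne_zero, and_false, if_false, Nat.cast_zero, div_zero]
    push_cast
    ring
  simp only [add_tsub_cancel_right, Nat.add_eq_zero_iff, one_ne_zero, and_false, if_false]
  rw [Nat.choose_succ_succ' a, Nat.choose_succ_succ' b]
  push_cast
  rw [Nat.cast_choose_succ_right a, Nat.cast_choose_succ_right b]
  field_simp
  ring

theorem peakFormula_zero_right (a k : ℕ) : peakFormula a 0 k = if k = 0 then 1 else 0 := rfl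

theorem peakFormula_succ_zero (a b : ℕ) : peakFormula a (b + 1) 0 = 0 := by
  simp [peakFormula]

theorem peakFormula_self_succ (a k : ℕ) : peakFormula a (a + 1) k = 0 := by
  simp [peakFormula]

theorem ncard_ballotPaths_eq_peakFormula {a b : ℕ} (k : ℕ) (hb : b ≤ a + 1) :
    ((ballotPaths a b k).ncard : ℚ) = peakFormula a b k := by
  induction a generalizing b k with
  | zero =>
    obtain rfl | rfl : b = 0 ∨ b = 1 := by omega
    · rw [ncard_ballotPaths_zero, peakFormula_zero_right]
      split_ifs <;> simp
    · rw [ballotPaths_eq_empty_of_lt k zero_lt_one, peakFormula_self_succ]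
      simp
  | succ a iha =>
    induction b generalizing k with
    | zero =>
      rw [ncard_ballotPaths_zero, peakFormula_zero_right]
      split_ifs <;> simp
    | succ b ihb =>
      obtain rfl | hba : b = a + 1 ∨ b ≤ a := by omega
      · rw [ballotPaths_eq_empty_of_lt k (by omega), peakFormula_self_succ]
        simp
      rcases k with _ | k
      · rw [ballotPaths_succ_zero, peakFormula_succ_zero]
        simp
      have hrec : (_ : ℚ) = _ :=
        congrArg (Nat.cast : ℕ → ℚ) (ncard_ballotPaths_succ_succ k hba)
      push_cast at hrec
      rw [iha (k + 1) (by omega), iha k (by omega), iha (k + 1) (by omega),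
        ihb (k + 1) (by omega)] at hrec
      linarith [peakFormula_succ_succ a b k]

/-- For `1 ≤ j ≤ n/2` and any `k ≥ 0`, the number of lattice paths from `(0,0)` to
`(n, n-2j)` (with `n - j` up steps `true` and `j` down steps `false`, never below the
x-axis) having exactly `k` peaks (factors `UD`) equals the coefficient of `x^k` in
`C(n,j,x) = ∑_{m=1}^{j} ((n+1-2j)/m)·binom(n-j,m-1)·binom(j-1,m-1)·x^m`. -/
theorem stmt_7 (n j k : ℕ) (hj1 : 1 ≤ j) (hj2 : 2 * j ≤ n) :
    ({l : List Bool | l.count true = n - j ∧ l.count false = j ∧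
        (∀ p : List Bool, p <+: l → p.count false ≤ p.count true) ∧
        countFactor [true, false] l = k}.ncard : ℚ) =
      if 1 ≤ k ∧ k ≤ j then
        ((n : ℚ) + 1 - 2 * j) / k * ((n - j).choose (k - 1)) * ((j - 1).choose (k - 1))
      else 0 := by
  change ((ballotPaths (n - j) j k).ncard : ℚ) = _
  rw [ncard_ballotPaths_eq_peakFormula k (by omega), peakFormula, if_neg (by omega),
    Nat.cast_sub (by omega)]
  split_ifs with hk
  · ring
  · rcases Nat.eq_zero_or_pos k with rfl | hk0
    · simp
    · rw [Nat.choose_eq_zero_of_lt (n := j - 1) (by omega)]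
      simp
end

section
/- Let A and B be sparse subsets of [n-1]. Then the number of labeled balanced words with n U's and n D's that are (A,B)-compatible equals binom(2(n-|A|-|B|), n-|A|-|B|). -/
/-!
Contract every forced factor of an `(A, B)`-compatible word: `U_a U_{a+1} D` to `U` for `a ∈ A`,
`U D_b D_{b+1}` to `D` for `b ∈ B`, and the overlap `U U D D` of two such factors to the empty
word. Each constraint removes one `U` and one `D`, so the result has `m = n - |A| - |B|` letters of
each kind. The inverse map `expand` scans a word with `m` letters of each kind from left to right
and re-inserts the factors where `A` and `B` dictate. It is injective, and for sparse `A` and `B`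
it hits exactly the compatible words: sparseness keeps the re-inserted factors from interfering,
and inside `[1, n - 1]` it forces `2|A|, 2|B| ≤ n`. Hence the count is `binom(2m, m)`.
-/

/-- The factor `U_a U_{a+1} D` occurs in `l`: the `a`-th and `(a+1)`-st `U`
letters are adjacent and immediately followed by a `D`. -/
def HasUUDAt (l : List Bool) (a : ℕ) : Prop :=
  ∃ u v : List Bool, l = u ++ [true, true, false] ++ v ∧ u.count true = a - 1

/-- The factor `U D_b D_{b+1}` occurs in `l`: the `b`-th and `(b+1)`-st `D`
letters are adjacent and immediately preceded by a `U`. -/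
def HasUDDAt (l : List Bool) (b : ℕ) : Prop :=
  ∃ u v : List Bool, l = u ++ [true, false, false] ++ v ∧ u.count false = b - 1

open Finset

theorem List.exists_cons_eq_append_append_iff {α : Type*} {x : α} {l p : List α}
    {P : List α → Prop} :
    (∃ u v, x :: l = u ++ p ++ v ∧ P u) ↔
      (P [] ∧ ∃ v, x :: l = p ++ v) ∨ ∃ u v, l = u ++ p ++ v ∧ P (x :: u) := by
  constructor
  · rintro ⟨_ | ⟨y, u⟩, v, h, hP⟩
    · exact .inl ⟨hP, v, h⟩
    · simp only [List.cons_append, List.cons.injEq] at h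
      obtain ⟨rfl, rfl⟩ := h
      exact .inr ⟨u, v, rfl, hP⟩
  · rintro (⟨hP, v, h⟩ | ⟨u, v, rfl, hP⟩)
    · exact ⟨[], v, h, hP⟩
    · exact ⟨x :: u, v, rfl, hP⟩

theorem List.setOf_count_eq_zero_left (q : ℕ) :
    {l : List Bool | l.count true = 0 ∧ l.count false = q} = {List.replicate q false} := by
  ext l
  refine ⟨fun ⟨h, hq⟩ => List.eq_replicate_iff.2 ⟨?_, fun b hb => ?_⟩, ?_⟩
  · rw [← hq, ← List.count_true_add_count_false, h, zero_add]
  · exact Bool.eq_false_iff.2 fun hb' => List.count_eq_zero.1 h (hb' ▸ hb)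
  · rintro rfl
    simp [List.count_replicate]

theorem List.setOf_count_eq_zero_right (p : ℕ) :
    {l : List Bool | l.count true = p ∧ l.count false = 0} = {List.replicate p true} := by
  ext l
  refine ⟨fun ⟨hp, h⟩ => List.eq_replicate_iff.2 ⟨?_, fun b hb => ?_⟩, ?_⟩
  · rw [← hp, ← List.count_true_add_count_false, h, add_zero]
  · exact eq_true_of_ne_false fun hb' => List.count_eq_zero.1 h (hb' ▸ hb)
  · rintro rfl
    simp [List.count_replicate]

theorem List.setOf_count_eq_succ_succ (p q : ℕ) :
    {l : List Bool | l.count true = p + 1 ∧ l.count false = q + 1} =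
      List.cons true '' {l | l.count true = p ∧ l.count false = q + 1} ∪
        List.cons false '' {l | l.count true = p + 1 ∧ l.count false = q} := by
  ext (_ | ⟨_ | _, l⟩) <;> simp

theorem List.finite_setOf_count_eq (p q : ℕ) :
    {l : List Bool | l.count true = p ∧ l.count false = q}.Finite :=
  (List.finite_length_eq Bool (p + q)).subset fun l ⟨hp, hq⟩ => by
    simp [← List.count_true_add_count_false, hp, hq]

theorem List.ncard_setOf_count_eq (p q : ℕ) :
    {l : List Bool | l.count true = p ∧ l.count false = q}.ncard = (p + q).choose p := by
  induction p generalizing q with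
  | zero => simp [List.setOf_count_eq_zero_left]
  | succ p ihp =>
    induction q with
    | zero => simp [List.setOf_count_eq_zero_right]
    | succ q ihq =>
      have hdisj : _root_.Disjoint
          (List.cons true '' {l | l.count true = p ∧ l.count false = q + 1})
          (List.cons false '' {l | l.count true = p + 1 ∧ l.count false = q}) :=
        Set.disjoint_left.2 fun _ ⟨_, _, h⟩ ⟨_, _, h'⟩ => by simp [← h] at h'
      rw [List.setOf_count_eq_succ_succ, Set.ncard_union_eq hdisj
          ((List.finite_setOf_count_eq _ _).image _) ((List.finite_setOf_count_eq _ _).image _),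
        Set.ncard_image_of_injective _ List.cons_injective,
        Set.ncard_image_of_injective _ List.cons_injective, ihp, ihq,
        show p + (q + 1) = p + q + 1 by ring, show p + 1 + q = p + q + 1 by ring,
        show p + 1 + (q + 1) = p + q + 1 + 1 by ring]
      exact (Nat.choose_succ_succ _ _).symm

theorem Finset.forall_mem_lt_iff_succ (S : Finset ℕ) (i : ℕ) (P : ℕ → Prop) :
    (∀ a ∈ S, i < a → P a) ↔
      (i + 1 ∈ S → P (i + 1)) ∧ ∀ a ∈ S, i + 1 < a → P a := by
  refine ⟨fun h => ⟨fun ha => h _ ha (by omega), fun a ha hia => h a ha (by omega)⟩,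
    fun h a ha hia => ?_⟩
  rcases (show a = i + 1 ∨ i + 1 < a by omega) with rfl | hia'
  exacts [h.1 ha, h.2 a ha hia']

namespace BalancedWord

section Factors

variable {l : List Bool} {k : ℕ}

theorem not_hasUUDAt_nil : ¬HasUUDAt [] k := by
  simp [HasUUDAt]

theorem hasUUDAt_false_cons : HasUUDAt (false :: l) k ↔ HasUUDAt l k := by
  unfold HasUUDAt; rw [List.exists_cons_eq_append_append_iff]; simp

theorem hasUUDAt_true_cons_add_two : HasUUDAt (true :: l) (k + 2) ↔ HasUUDAt l (k + 1) := by
  unfold HasUUDAt; rw [List.exists_cons_eq_append_append_iff]; simp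

theorem hasUUDAt_true_cons_one : HasUUDAt (true :: l) 1 ↔ ∃ v, l = true :: false :: v := by
  unfold HasUUDAt; rw [List.exists_cons_eq_append_append_iff]; simp

theorem not_hasUDDAt_nil : ¬HasUDDAt [] k := by
  simp [HasUDDAt]

theorem not_hasUDDAt_false_cons_one : ¬HasUDDAt (false :: l) 1 := by
  unfold HasUDDAt; rw [List.exists_cons_eq_append_append_iff]; simp

theorem hasUDDAt_false_cons_add_two : HasUDDAt (false :: l) (k + 2) ↔ HasUDDAt l (k + 1) := by
  unfold HasUDDAt; rw [List.exists_cons_eq_append_append_iff]; simp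

theorem hasUDDAt_true_cons_add_two : HasUDDAt (true :: l) (k + 2) ↔ HasUDDAt l (k + 2) := by
  unfold HasUDDAt; rw [List.exists_cons_eq_append_append_iff]; simp

theorem hasUDDAt_true_cons_one :
    HasUDDAt (true :: l) 1 ↔ (∃ v, l = false :: false :: v) ∨ HasUDDAt l 1 := by
  unfold HasUDDAt; rw [List.exists_cons_eq_append_append_iff]; simp

theorem exists_eq_uudd_of_hasUUDAt_one (hA : HasUUDAt l 1) (hB : HasUDDAt l 1) :
    ∃ r, l = true :: true :: false :: false :: r := by
  rcases l with _ | ⟨_ | _, l⟩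
  · exact absurd hA not_hasUUDAt_nil
  · exact absurd hB not_hasUDDAt_false_cons_one
  obtain ⟨v, rfl⟩ := hasUUDAt_true_cons_one.1 hA
  simpa [hasUDDAt_true_cons_one, not_hasUDDAt_false_cons_one] using hB

end Factors

/- `l` is the suffix of a word after its first `i` `U`s (resp. `j` `D`s); the constraints still
ahead are re-indexed relative to `l`. -/
def UUDFrom (A : Finset ℕ) (i : ℕ) (l : List Bool) : Prop :=
  ∀ a ∈ A, i < a → HasUUDAt l (a - i)

def UDDFrom (B : Finset ℕ) (j : ℕ) (l : List Bool) : Prop :=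
  ∀ b ∈ B, j < b → HasUDDAt l (b - j)

variable {A B : Finset ℕ} {i j : ℕ} {l w r : List Bool}

theorem uudFrom_nil : UUDFrom A i [] ↔ {a ∈ A | i < a} = ∅ := by
  simp [UUDFrom, not_hasUUDAt_nil, filter_eq_empty_iff]

theorem uudFrom_false_cons : UUDFrom A i (false :: l) ↔ UUDFrom A i l := by
  simp only [UUDFrom, hasUUDAt_false_cons]

theorem uudFrom_true_cons :
    UUDFrom A i (true :: l) ↔
      (i + 1 ∈ A → HasUUDAt (true :: l) 1) ∧ UUDFrom A (i + 1) l := by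
  rw [UUDFrom, forall_mem_lt_iff_succ, Nat.add_sub_cancel_left]
  refine and_congr_right fun _ => forall₂_congr fun a _ => imp_congr_right fun hia => ?_
  rw [show a - i = a - (i + 1) - 1 + 2 by omega, hasUUDAt_true_cons_add_two,
    show a - (i + 1) - 1 + 1 = a - (i + 1) by omega]

theorem uudFrom_true_cons_of_notMem (hA : i + 1 ∉ A) :
    UUDFrom A i (true :: l) ↔ UUDFrom A (i + 1) l := by
  simp [uudFrom_true_cons, hA]

theorem uudFrom_uud_cons :
    UUDFrom A i (true :: true :: false :: l) ↔ i + 2 ∉ A ∧ UUDFrom A (i + 2) l := by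
  simp [uudFrom_true_cons, hasUUDAt_true_cons_one, uudFrom_false_cons]

theorem uddFrom_nil : UDDFrom B j [] ↔ {b ∈ B | j < b} = ∅ := by
  simp [UDDFrom, not_hasUDDAt_nil, filter_eq_empty_iff]

theorem uddFrom_false_cons : UDDFrom B j (false :: l) ↔ j + 1 ∉ B ∧ UDDFrom B (j + 1) l := by
  rw [UDDFrom, forall_mem_lt_iff_succ, Nat.add_sub_cancel_left]
  refine and_congr (by simp [not_hasUDDAt_false_cons_one]) <|
    forall₂_congr fun b _ => imp_congr_right fun hjb => ?_
  rw [show b - j = b - (j + 1) - 1 + 2 by omega, hasUDDAt_false_cons_add_two,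
    show b - (j + 1) - 1 + 1 = b - (j + 1) by omega]

theorem uddFrom_true_cons (h : j + 1 ∈ B → ∀ v, l ≠ false :: false :: v) :
    UDDFrom B j (true :: l) ↔ UDDFrom B j l := by
  refine forall₂_congr fun b hb => imp_congr_right fun hjb => ?_
  rcases (show b = j + 1 ∨ j + 1 < b by omega) with rfl | hjb'
  · simp [hasUDDAt_true_cons_one, h hb]
  · rw [show b - j = b - j - 2 + 2 by omega, hasUDDAt_true_cons_add_two]

theorem uddFrom_udd_cons :
    UDDFrom B j (true :: false :: false :: l) ↔ j + 2 ∉ B ∧ UDDFrom B (j + 2) l := by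
  rw [UDDFrom, forall_mem_lt_iff_succ, forall_mem_lt_iff_succ, Nat.add_sub_cancel_left,
    show j + 1 + 1 - j = 0 + 2 by omega, hasUDDAt_true_cons_add_two, hasUDDAt_false_cons_add_two]
  simp only [hasUDDAt_true_cons_one, List.cons.injEq, exists_eq', true_or,
    implies_true, zero_add, not_hasUDDAt_false_cons_one, imp_false, true_and]
  refine and_congr Iff.rfl <| forall₂_congr fun b _ => imp_congr_right fun hjb => ?_
  rw [show b - j = b - (j + 2) - 1 + 3 by omega, hasUDDAt_true_cons_add_two,
    hasUDDAt_false_cons_add_two, hasUDDAt_false_cons_add_two,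
    show b - (j + 2) - 1 + 1 = b - (j + 2) by omega]

def Sparse (S : Finset ℕ) : Prop := ∀ a ∈ S, a + 1 ∉ S

theorem Sparse.two_mul_card_filter_lt_le {S : Finset ℕ} {n : ℕ} (hS : Sparse S)
    (hn : ∀ a ∈ S, a < n) (t : ℕ) : 2 * #{a ∈ S | t < a} ≤ n - t := by
  set T := {a ∈ S | t < a}
  have hdisj : Disjoint T (T.map (addRightEmbedding 1)) := by
    simp only [disjoint_right, mem_map, addRightEmbedding_apply]
    rintro _ ⟨a, ha, rfl⟩ ha'
    exact hS a (mem_filter.1 ha).1 (mem_filter.1 ha').1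
  have hsub : T ∪ T.map (addRightEmbedding 1) ⊆ Ioc t n := by
    intro x hx
    simp only [T, mem_union, mem_map, mem_filter, addRightEmbedding_apply] at hx
    rcases hx with ⟨hx, htx⟩ | ⟨a, ⟨ha, hta⟩, rfl⟩
    · have := hn x hx; simp only [mem_Ioc]; omega
    · have := hn a ha; simp only [mem_Ioc]; omega
  calc 2 * #T = #(T ∪ T.map (addRightEmbedding 1)) := by
        rw [card_union_of_disjoint hdisj, card_map]; ring
    _ ≤ #(Ioc t n) := card_le_card hsub
    _ = n - t := Nat.card_Ioc t n

theorem card_filter_lt_of_notMem {S : Finset ℕ} (h : i + 1 ∉ S) :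
    #{a ∈ S | i < a} = #{a ∈ S | i + 1 < a} := by
  congr 1
  refine filter_congr fun a ha => ?_
  have : a ≠ i + 1 := by rintro rfl; exact h ha
  omega

theorem Sparse.card_filter_lt_of_mem {S : Finset ℕ} (hS : Sparse S) (h : i + 1 ∈ S) :
    #{a ∈ S | i < a} = #{a ∈ S | i + 2 < a} + 1 := by
  have : {a ∈ S | i < a} = insert (i + 1) {a ∈ S | i + 1 < a} := by
    ext a
    simp only [mem_insert, mem_filter]
    constructor
    · rintro ⟨ha, hia⟩
      rcases (show a = i + 1 ∨ i + 1 < a by omega) with rfl | h'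
      exacts [.inl rfl, .inr ⟨ha, h'⟩]
    · rintro (rfl | ⟨ha, hia⟩)
      exacts [⟨h, by omega⟩, ⟨ha, by omega⟩]
  rw [this, card_insert_of_notMem (by simp), card_filter_lt_of_notMem (hS _ h)]

/- Two sparse subsets of `(i, n)` with `n - i > 0` elements in total must both contain
`i + 1`. -/
theorem card_filter_lt_add_card_filter_lt_eq_zero {n : ℕ} (hA : Sparse A) (hB : Sparse B)
    (hAn : ∀ a ∈ A, a < n) (hBn : ∀ b ∈ B, b < n) (hAB : ¬(i + 1 ∈ A ∧ i + 1 ∈ B))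
    (h : i + #{a ∈ A | i < a} + #{b ∈ B | i < b} = n) :
    #{a ∈ A | i < a} + #{b ∈ B | i < b} = 0 := by
  have hA' := hA.two_mul_card_filter_lt_le hAn
  have hB' := hB.two_mul_card_filter_lt_le hBn
  by_cases hA1 : i + 1 ∈ A
  · have := card_filter_lt_of_notMem fun hB1 => hAB ⟨hA1, hB1⟩
    have := hA' i; have := hB' (i + 1); omega
  · have := card_filter_lt_of_notMem hA1
    have := hA' (i + 1); have := hB' i; omega

/-- Inverse of contracting the forced factors; `i` and `j` count the `U`s and `D`s written
so far. -/
def expand (A B : Finset ℕ) (i j : ℕ) (w : List Bool) : List Bool :=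
  if i + 1 ∈ A ∧ j + 1 ∈ B then
    true :: true :: false :: false :: expand A B (i + 2) (j + 2) w
  else
    match w with
    | [] => []
    | true :: r =>
      if i + 1 ∈ A then true :: true :: false :: expand A B (i + 2) (j + 1) r
      else true :: expand A B (i + 1) j r
    | false :: r =>
      if j + 1 ∈ B then true :: false :: false :: expand A B (i + 1) (j + 2) r
      else false :: expand A B i (j + 1) r
termination_by w.length + (A.sup id - i)
decreasing_by
  · have : i + 1 ≤ A.sup id := le_sup (f := id) ‹i + 1 ∈ A ∧ j + 1 ∈ B›.1
    omega
  all_goals simp only [List.length_cons]; omega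

theorem expand_of_mem_of_mem (hA : i + 1 ∈ A) (hB : j + 1 ∈ B) :
    expand A B i j w = true :: true :: false :: false :: expand A B (i + 2) (j + 2) w := by
  rw [expand.eq_def, if_pos ⟨hA, hB⟩]

theorem expand_nil (h : ¬(i + 1 ∈ A ∧ j + 1 ∈ B)) : expand A B i j [] = [] := by
  rw [expand.eq_def]; simp [h]

theorem expand_true_cons_of_mem (hA : i + 1 ∈ A) (hB : j + 1 ∉ B) :
    expand A B i j (true :: r) = true :: true :: false :: expand A B (i + 2) (j + 1) r := by
  rw [expand.eq_def]; simp [hA, hB]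

theorem expand_true_cons_of_notMem (hA : i + 1 ∉ A) :
    expand A B i j (true :: r) = true :: expand A B (i + 1) j r := by
  rw [expand.eq_def]; simp [hA]

theorem expand_false_cons_of_mem (hA : i + 1 ∉ A) (hB : j + 1 ∈ B) :
    expand A B i j (false :: r) = true :: false :: false :: expand A B (i + 1) (j + 2) r := by
  rw [expand.eq_def]; simp [hA, hB]

theorem expand_false_cons_of_notMem (hB : j + 1 ∉ B) :
    expand A B i j (false :: r) = false :: expand A B i (j + 1) r := by
  rw [expand.eq_def]; simp [hB]

theorem head?_expand_ne_false (hB : j + 1 ∈ B) (w : List Bool) :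
    (expand A B i j w).head? ≠ some false := by
  by_cases hA : i + 1 ∈ A
  · simp [expand_of_mem_of_mem hA hB]
  rcases w with _ | ⟨_ | _, r⟩
  · simp [expand_nil (A := A) (B := B) fun h => hA h.1]
  · simp [expand_false_cons_of_mem hA hB]
  · simp [expand_true_cons_of_notMem hA]

theorem expand_cons_ne_nil (h : ¬(i + 1 ∈ A ∧ j + 1 ∈ B)) (c : Bool) (r : List Bool) :
    expand A B i j (c :: r) ≠ [] := by
  rw [expand.eq_def, if_neg h]
  cases c <;> split_ifs <;> simp

theorem expand_true_cons_ne_false_cons (h : ¬(i + 1 ∈ A ∧ j + 1 ∈ B)) (r r' : List Bool) :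
    expand A B i j (true :: r) ≠ expand A B i j (false :: r') := by
  by_cases hA : i + 1 ∈ A
  · have hB : j + 1 ∉ B := fun hB => h ⟨hA, hB⟩
    simp [expand_true_cons_of_mem hA hB, expand_false_cons_of_notMem hB]
  by_cases hB : j + 1 ∈ B
  · rw [expand_true_cons_of_notMem hA, expand_false_cons_of_mem hA hB]
    intro heq
    simp only [List.cons.injEq, true_and] at heq
    exact head?_expand_ne_false (i := i + 1) hB r (by rw [heq]; rfl)
  · simp [expand_true_cons_of_notMem hA, expand_false_cons_of_notMem hB]

theorem expand_injective : Function.Injective (expand A B i j) := by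
  intro w w' h
  induction i, j, w using expand.induct (A := A) (B := B) generalizing w' with
  | case1 i j w hAB ih =>
    simp only [expand_of_mem_of_mem hAB.1 hAB.2, List.cons.injEq, true_and] at h
    exact ih h
  | case2 i j hAB =>
    rcases w' with _ | ⟨c, r'⟩
    · rfl
    · exact absurd (h ▸ expand_nil hAB) (expand_cons_ne_nil hAB c r')
  | case3 i j hAB r hA ih =>
    have hB : j + 1 ∉ B := fun hB => hAB ⟨hA, hB⟩
    rcases w' with _ | ⟨_ | _, r'⟩
    · exact absurd (h.trans (expand_nil hAB)) (expand_cons_ne_nil hAB _ r)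
    · exact absurd h (expand_true_cons_ne_false_cons hAB r r')
    · simp only [expand_true_cons_of_mem hA hB, List.cons.injEq, true_and] at h
      rw [ih h]
  | case4 i j hAB r hA ih =>
    rcases w' with _ | ⟨_ | _, r'⟩
    · exact absurd (h.trans (expand_nil hAB)) (expand_cons_ne_nil hAB _ r)
    · exact absurd h (expand_true_cons_ne_false_cons hAB r r')
    · simp only [expand_true_cons_of_notMem hA, List.cons.injEq, true_and] at h
      rw [ih h]
  | case5 i j hAB r hB ih =>
    have hA : i + 1 ∉ A := fun hA => hAB ⟨hA, hB⟩
    rcases w' with _ | ⟨_ | _, r'⟩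
    · exact absurd (h.trans (expand_nil hAB)) (expand_cons_ne_nil hAB _ r)
    · simp only [expand_false_cons_of_mem hA hB, List.cons.injEq, true_and] at h
      rw [ih h]
    · exact absurd h.symm (expand_true_cons_ne_false_cons hAB r' r)
  | case6 i j hAB r hB ih =>
    rcases w' with _ | ⟨_ | _, r'⟩
    · exact absurd (h.trans (expand_nil hAB)) (expand_cons_ne_nil hAB _ r)
    · simp only [expand_false_cons_of_notMem hB, List.cons.injEq, true_and] at h
      rw [ih h]
    · exact absurd h.symm (expand_true_cons_ne_false_cons hAB r' r)

theorem expand_balanced_compatible {n : ℕ} (hA : Sparse A) (hB : Sparse B)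
    (hAn : ∀ a ∈ A, a < n) (hBn : ∀ b ∈ B, b < n)
    (hT : i + w.count true + #{a ∈ A | i < a} + #{b ∈ B | j < b} = n)
    (hF : j + w.count false + #{a ∈ A | i < a} + #{b ∈ B | j < b} = n) :
    i + (expand A B i j w).count true = n ∧ j + (expand A B i j w).count false = n ∧
      UUDFrom A i (expand A B i j w) ∧ UDDFrom B j (expand A B i j w) := by
  induction i, j, w using expand.induct (A := A) (B := B) with
  | case1 i j w hAB ih =>
    rw [hA.card_filter_lt_of_mem hAB.1, hB.card_filter_lt_of_mem hAB.2] at hT hF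
    rw [expand_of_mem_of_mem hAB.1 hAB.2, uudFrom_uud_cons, uudFrom_false_cons,
      uddFrom_true_cons (by simp), uddFrom_udd_cons]
    simp +decide only [List.count_cons, reduceIte]
    obtain ⟨hT', hF', hUA, hUB⟩ := ih (by omega) (by omega)
    exact ⟨by omega, by omega, ⟨hA _ hAB.1, hUA⟩, ⟨hB _ hAB.2, hUB⟩⟩
  | case2 i j hAB =>
    simp only [List.count_nil, add_zero] at hT hF
    obtain rfl : i = j := by omega
    have h0 := card_filter_lt_add_card_filter_lt_eq_zero hA hB hAn hBn hAB hT
    rw [expand_nil hAB, uudFrom_nil, uddFrom_nil, ← card_eq_zero, ← card_eq_zero,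
      List.count_nil, List.count_nil]
    omega
  | case3 i j hAB r hA1 ih =>
    have hB1 : j + 1 ∉ B := fun hB1 => hAB ⟨hA1, hB1⟩
    rw [hA.card_filter_lt_of_mem hA1, card_filter_lt_of_notMem hB1] at hT hF
    rw [expand_true_cons_of_mem hA1 hB1, uudFrom_uud_cons, uddFrom_true_cons (by simp [hB1]),
      uddFrom_true_cons (by simp [hB1]), uddFrom_false_cons]
    simp +decide only [List.count_cons, reduceIte] at hT hF ⊢
    obtain ⟨hT', hF', hUA, hUB⟩ := ih (by omega) (by omega)
    exact ⟨by omega, by omega, ⟨hA _ hA1, hUA⟩, ⟨hB1, hUB⟩⟩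
  | case4 i j hAB r hA1 ih =>
    rw [card_filter_lt_of_notMem hA1] at hT hF
    rw [expand_true_cons_of_notMem hA1, uudFrom_true_cons_of_notMem hA1,
      uddFrom_true_cons fun hB1 v heq => head?_expand_ne_false hB1 r (by rw [heq]; rfl)]
    simp +decide only [List.count_cons, reduceIte] at hT hF ⊢
    obtain ⟨hT', hF', hUA, hUB⟩ := ih (by omega) (by omega)
    exact ⟨by omega, by omega, hUA, hUB⟩
  | case5 i j hAB r hB1 ih =>
    have hA1 : i + 1 ∉ A := fun hA1 => hAB ⟨hA1, hB1⟩
    rw [card_filter_lt_of_notMem hA1, hB.card_filter_lt_of_mem hB1] at hT hF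
    rw [expand_false_cons_of_mem hA1 hB1, uudFrom_true_cons_of_notMem hA1, uudFrom_false_cons,
      uudFrom_false_cons, uddFrom_udd_cons]
    simp +decide only [List.count_cons, reduceIte] at hT hF ⊢
    obtain ⟨hT', hF', hUA, hUB⟩ := ih (by omega) (by omega)
    exact ⟨by omega, by omega, hUA, ⟨hB _ hB1, hUB⟩⟩
  | case6 i j hAB r hB1 ih =>
    rw [card_filter_lt_of_notMem hB1] at hT hF
    rw [expand_false_cons_of_notMem hB1, uudFrom_false_cons, uddFrom_false_cons]
    simp +decide only [List.count_cons, reduceIte] at hT hF ⊢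
    obtain ⟨hT', hF', hUA, hUB⟩ := ih (by omega) (by omega)
    exact ⟨by omega, by omega, hUA, ⟨hB1, hUB⟩⟩

theorem exists_expand_eq (hA : Sparse A) (hB : Sparse B) {i j : ℕ} (l : List Bool)
    (hUA : UUDFrom A i l) (hUB : UDDFrom B j l) :
    ∃ w, expand A B i j w = l ∧
      w.count true + #{a ∈ A | i < a} + #{b ∈ B | j < b} = l.count true ∧
      w.count false + #{a ∈ A | i < a} + #{b ∈ B | j < b} = l.count false := by
  by_cases hAB : i + 1 ∈ A ∧ j + 1 ∈ B
  · obtain ⟨r, rfl⟩ := exists_eq_uudd_of_hasUUDAt_one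
      (by simpa using hUA _ hAB.1 (by omega)) (by simpa using hUB _ hAB.2 (by omega))
    rw [uudFrom_uud_cons, uudFrom_false_cons] at hUA
    rw [uddFrom_true_cons (by simp), uddFrom_udd_cons] at hUB
    obtain ⟨w, hw, hT, hF⟩ := exists_expand_eq hA hB r hUA.2 hUB.2
    rw [hA.card_filter_lt_of_mem hAB.1, hB.card_filter_lt_of_mem hAB.2]
    refine ⟨w, by rw [expand_of_mem_of_mem hAB.1 hAB.2, hw], ?_, ?_⟩ <;>
      simp +decide only [List.count_cons, reduceIte] <;> omega
  match l with
  | [] =>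
    rw [uudFrom_nil] at hUA
    rw [uddFrom_nil] at hUB
    exact ⟨[], expand_nil hAB, by simp [hUA, hUB], by simp [hUA, hUB]⟩
  | false :: r =>
    obtain ⟨hB1, hUB⟩ := uddFrom_false_cons.1 hUB
    obtain ⟨w, hw, hT, hF⟩ := exists_expand_eq hA hB r (uudFrom_false_cons.1 hUA) hUB
    rw [card_filter_lt_of_notMem hB1]
    refine ⟨false :: w, by rw [expand_false_cons_of_notMem hB1, hw], ?_, ?_⟩ <;>
      simp +decide only [List.count_cons, reduceIte] <;> omega
  | true :: r =>
    by_cases hA1 : i + 1 ∈ A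
    · have hB1 : j + 1 ∉ B := fun hB1 => hAB ⟨hA1, hB1⟩
      obtain ⟨v, rfl⟩ := hasUUDAt_true_cons_one.1 (by simpa using hUA _ hA1 (by omega))
      rw [uudFrom_uud_cons] at hUA
      rw [uddFrom_true_cons (by simp [hB1]), uddFrom_true_cons (by simp [hB1]),
        uddFrom_false_cons] at hUB
      obtain ⟨w, hw, hT, hF⟩ := exists_expand_eq hA hB v hUA.2 hUB.2
      rw [hA.card_filter_lt_of_mem hA1, card_filter_lt_of_notMem hB1]
      refine ⟨true :: w, by rw [expand_true_cons_of_mem hA1 hB1, hw], ?_, ?_⟩ <;>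
        simp +decide only [List.count_cons, reduceIte] <;> omega
    by_cases hudd : j + 1 ∈ B ∧ ∃ v, r = false :: false :: v
    · obtain ⟨hB1, v, rfl⟩ := hudd
      rw [uudFrom_true_cons_of_notMem hA1, uudFrom_false_cons, uudFrom_false_cons] at hUA
      rw [uddFrom_udd_cons] at hUB
      obtain ⟨w, hw, hT, hF⟩ := exists_expand_eq hA hB v hUA hUB.2
      rw [card_filter_lt_of_notMem hA1, hB.card_filter_lt_of_mem hB1]
      refine ⟨false :: w, by rw [expand_false_cons_of_mem hA1 hB1, hw], ?_, ?_⟩ <;>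
        simp +decide only [List.count_cons, reduceIte] <;> omega
    rw [uudFrom_true_cons_of_notMem hA1] at hUA
    rw [uddFrom_true_cons fun hB1 v hv => hudd ⟨hB1, v, hv⟩] at hUB
    obtain ⟨w, hw, hT, hF⟩ := exists_expand_eq hA hB r hUA hUB
    rw [card_filter_lt_of_notMem hA1]
    refine ⟨true :: w, by rw [expand_true_cons_of_notMem hA1, hw], ?_, ?_⟩ <;>
      simp +decide only [List.count_cons, reduceIte] <;> omega
termination_by l.length

theorem setOf_compatible_eq_image {n : ℕ} (hA : Sparse A) (hB : Sparse B)
    (hAn : ∀ a ∈ A, 0 < a ∧ a < n) (hBn : ∀ b ∈ B, 0 < b ∧ b < n) (hn : #A + #B ≤ n) :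
    {l : List Bool | l.count true = n ∧ l.count false = n ∧
        (∀ a ∈ A, HasUUDAt l a) ∧ (∀ b ∈ B, HasUDDAt l b)} =
      expand A B 0 0 '' {w | w.count true = n - #A - #B ∧ w.count false = n - #A - #B} := by
  have hA0 : #{a ∈ A | 0 < a} = #A := congrArg card (filter_true_of_mem fun a ha => (hAn a ha).1)
  have hB0 : #{b ∈ B | 0 < b} = #B := congrArg card (filter_true_of_mem fun b hb => (hBn b hb).1)
  have hUA (l : List Bool) : (∀ a ∈ A, HasUUDAt l a) ↔ UUDFrom A 0 l :=
    forall₂_congr fun a ha => by simp [(hAn a ha).1]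
  have hUB (l : List Bool) : (∀ b ∈ B, HasUDDAt l b) ↔ UDDFrom B 0 l :=
    forall₂_congr fun b hb => by simp [(hBn b hb).1]
  ext l
  simp only [Set.mem_ofPred_eq, Set.mem_image, hUA, hUB]
  constructor
  · rintro ⟨hT, hF, hlA, hlB⟩
    obtain ⟨w, hw, hwT, hwF⟩ := exists_expand_eq hA hB l hlA hlB
    exact ⟨w, ⟨by omega, by omega⟩, hw⟩
  · rintro ⟨w, ⟨hwT, hwF⟩, rfl⟩
    obtain ⟨hT, hF, hlA, hlB⟩ := expand_balanced_compatible (i := 0) (j := 0) (w := w) hA hB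
      (fun a ha => (hAn a ha).2) (fun b hb => (hBn b hb).2) (by omega) (by omega)
    exact ⟨by omega, by omega, hlA, hlB⟩

end BalancedWord

/-- For sparse subsets `A, B ⊆ [n-1]`, the number of `(A,B)`-compatible balanced words
with `n` `U`s and `n` `D`s equals the central binomial coefficient
`binom(2(n-|A|-|B|), n-|A|-|B|)`. -/
theorem stmt_10 (n : ℕ) (A B : Finset ℕ)
    (hA : A ⊆ Finset.Icc 1 (n - 1)) (hB : B ⊆ Finset.Icc 1 (n - 1))
    (hAsparse : ∀ a ∈ A, a + 1 ∉ A) (hBsparse : ∀ b ∈ B, b + 1 ∉ B) :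
    {l : List Bool | l.count true = n ∧ l.count false = n ∧
        (∀ a ∈ A, HasUUDAt l a) ∧ (∀ b ∈ B, HasUDDAt l b)}.ncard =
      (2 * (n - A.card - B.card)).choose (n - A.card - B.card) := by
  have hAn : ∀ a ∈ A, 0 < a ∧ a < n := fun a ha => by have := mem_Icc.1 (hA ha); omega
  have hBn : ∀ b ∈ B, 0 < b ∧ b < n := fun b hb => by have := mem_Icc.1 (hB hb); omega
  have hA2 := BalancedWord.Sparse.two_mul_card_filter_lt_le hAsparse (fun a ha => (hAn a ha).2) 0
  have hB2 := BalancedWord.Sparse.two_mul_card_filter_lt_le hBsparse (fun b hb => (hBn b hb).2) 0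
  rw [filter_true_of_mem fun a ha => (hAn a ha).1] at hA2
  rw [filter_true_of_mem fun b hb => (hBn b hb).1] at hB2
  rw [BalancedWord.setOf_compatible_eq_image hAsparse hBsparse hAn hBn (by omega),
    Set.ncard_image_of_injective _ BalancedWord.expand_injective, List.ncard_setOf_count_eq,
    two_mul]
end

section
/- Let A and B be sparse subsets of [n-1]. The number of 123-avoiding permutations π of [n] with B ⊆ Asc(π) and A ⊆ Asc(π^{-1}) equals the Catalan number C_{n - |A| - |B|}. -/
/-- `π` (as the word `π(1)⋯π(n)`) is `123`-avoiding. -/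
def Avoids123 {n : ℕ} (π : Equiv.Perm (Fin n)) : Prop :=
  ¬ ∃ i₁ i₂ i₃ : Fin n, i₁ < i₂ ∧ i₂ < i₃ ∧ π i₁ < π i₂ ∧ π i₂ < π i₃

/-- `i ∈ [n-1]` (1-based) is an ascent of `π`: `π(i) < π(i+1)`. -/
def IsAscentAt {n : ℕ} (π : Equiv.Perm (Fin n)) (i : ℕ) : Prop :=
  ∃ (h1 : i - 1 < n) (h2 : i < n), 1 ≤ i ∧ π ⟨i - 1, h1⟩ < π ⟨i, h2⟩

/-!
A permutation is recorded by its left-to-right minima: their positions `P` and their values. For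
a `123`-avoiding permutation the other entries decrease, so it is determined by this data, and
reading, for `e = 0, …, n - 1`, "is `e ∈ P`" and "is `n - 1 - e` not a minimum value" as up- or
down-steps gives a bijection with Dyck paths of semilength `n`; the Dyck condition is exactly
the condition for the data to come from a permutation.

In a `123`-avoiding permutation, `b` is an ascent iff position `b` is a left-to-right minimum and
`b + 1` is not, and likewise for values and ascents of `π⁻¹`. So the conditions on `A` and `B`
prescribe an up-step at `q` and a down-step at `q + 2` for `|A| + |B|` positions `q`, which by
sparseness do not overlap. Deleting these letters is a bijection onto all Dyck paths of
semilength `n - |A| - |B|`: the only prefixes whose height drops end strictly between a forced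
up-step and its forced down-step, where these two steps keep the height positive.
-/

open Finset Equiv

/-- `S` is the set of positions of the up-steps of a Dyck path of semilength `m`. -/
def IsDyckSet (m : ℕ) (S : Finset ℕ) : Prop :=
  S ⊆ range (2 * m) ∧ #S = m ∧ ∀ t ≤ 2 * m, t ≤ 2 * Nat.count (· ∈ S) t

lemma Nat.count_mem_eq_card_of_subset_range {S : Finset ℕ} {t : ℕ} (hS : S ⊆ range t) :
    Nat.count (· ∈ S) t = #S := by
  rw [Nat.count_eq_card_filter_range, filter_mem_eq_inter, inter_eq_right.2 hS]

lemma IsDyckSet.count_eq {m : ℕ} {S : Finset ℕ} (hS : IsDyckSet m S) :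
    Nat.count (· ∈ S) (2 * m) = m := by
  rw [Nat.count_mem_eq_card_of_subset_range hS.1, hS.2.1]

namespace DyckWord

open DyckStep

lemma count_U_take (l : List DyckStep) (t : ℕ) :
    (l.take t).count U = Nat.count (fun i => l[i]? = some U) t := by
  induction t with
  | zero => simp
  | succ t ih =>
    rw [List.take_add_one, List.count_append, ih, Nat.count_succ]
    rcases l[t]? with _ | _ | _ <;> simp

lemma count_U_add_count_D (l : List DyckStep) : l.count U + l.count D = l.length := by
  induction l with
  | nil => rfl
  | cons s l ih => cases s <;> simp <;> omega

def ofFinset (m : ℕ) (S : Finset ℕ) : List DyckStep :=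
  (List.range (2 * m)).map fun i => if i ∈ S then U else D

@[simp]
lemma length_ofFinset (m : ℕ) (S : Finset ℕ) : (ofFinset m S).length = 2 * m := by
  simp [ofFinset]

lemma getElem?_ofFinset_eq_U {m : ℕ} {S : Finset ℕ} (hS : S ⊆ range (2 * m)) (i : ℕ) :
    (ofFinset m S)[i]? = some U ↔ i ∈ S := by
  rcases lt_or_ge i (2 * m) with hi | hi
  · by_cases h : i ∈ S <;> simp [ofFinset, List.getElem?_range hi, h]
  · rw [List.getElem?_eq_none (by simpa using hi)]
    simpa using fun h => absurd (mem_range.1 (hS h)) (by omega)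

lemma count_U_take_ofFinset {m : ℕ} {S : Finset ℕ} (hS : S ⊆ range (2 * m)) (t : ℕ) :
    ((ofFinset m S).take t).count U = Nat.count (· ∈ S) t := by
  simp only [count_U_take, getElem?_ofFinset_eq_U hS]

def upSet (p : DyckWord) : Finset ℕ := {i ∈ range p.toList.length | p.toList[i]? = some U}

lemma upSet_subset (p : DyckWord) : p.upSet ⊆ range p.toList.length := filter_subset _ _

lemma mem_upSet {p : DyckWord} {i : ℕ} : i ∈ p.upSet ↔ p.toList[i]? = some U := by
  rw [upSet, mem_filter, mem_range, and_iff_right_iff_imp]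
  exact fun h => (List.getElem?_eq_some_iff.1 h).1

lemma isDyckSet_upSet (p : DyckWord) : IsDyckSet p.semilength p.upSet := by
  have hlen := p.two_mul_semilength_eq_length
  have hcount (t : ℕ) : Nat.count (· ∈ p.upSet) t = (p.toList.take t).count U := by
    simp only [mem_upSet, count_U_take]
  refine ⟨hlen ▸ p.upSet_subset, ?_, fun t ht => ?_⟩
  · rw [← Nat.count_mem_eq_card_of_subset_range p.upSet_subset, hcount,
      List.take_of_length_le le_rfl]
    rfl
  · have hUD := count_U_add_count_D (p.toList.take t)
    have := p.count_D_le_count_U t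
    rw [List.length_take, min_eq_left (hlen ▸ ht)] at hUD
    rw [hcount]
    omega

end DyckWord

namespace IsDyckSet

open DyckWord DyckStep

def toDyckWord {m : ℕ} {S : Finset ℕ} (hS : IsDyckSet m S) : DyckWord where
  toList := ofFinset m S
  count_U_eq_count_D := by
    have hU := count_U_take_ofFinset hS.1 (2 * m)
    have hUD := count_U_add_count_D (ofFinset m S)
    rw [List.take_of_length_le (by simp), hS.count_eq] at hU
    rw [length_ofFinset] at hUD
    omega
  count_D_le_count_U t := by
    have hUD := count_U_add_count_D ((ofFinset m S).take t)
    rw [List.length_take, length_ofFinset, count_U_take_ofFinset hS.1] at hUD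
    rw [count_U_take_ofFinset hS.1]
    have := hS.2.2 (min t (2 * m)) (min_le_right _ _)
    have := Nat.count_monotone (· ∈ S) (min_le_left t (2 * m))
    omega

lemma semilength_toDyckWord {m : ℕ} {S : Finset ℕ} (hS : IsDyckSet m S) :
    hS.toDyckWord.semilength = m := by
  have hU := count_U_take_ofFinset hS.1 (2 * m)
  rwa [List.take_of_length_le (by simp), hS.count_eq] at hU

end IsDyckSet

def dyckSetEquiv (m : ℕ) : {S // IsDyckSet m S} ≃ {p : DyckWord // p.semilength = m} where
  toFun S := ⟨S.2.toDyckWord, S.2.semilength_toDyckWord⟩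
  invFun p := ⟨p.1.upSet, by obtain ⟨p, rfl⟩ := p; exact p.isDyckSet_upSet⟩
  left_inv S := by
    ext i
    exact DyckWord.mem_upSet.trans (DyckWord.getElem?_ofFinset_eq_U S.2.1 i)
  right_inv p := by
    obtain ⟨p, rfl⟩ := p
    refine Subtype.ext (DyckWord.ext (List.ext_getElem? fun i => ?_))
    change (DyckWord.ofFinset _ p.upSet)[i]? = p.toList[i]?
    rcases lt_or_ge i (2 * p.semilength) with hi | hi
    · have hi' : i < p.toList.length := p.two_mul_semilength_eq_length ▸ hi
      simp only [DyckWord.ofFinset, List.getElem?_map, List.getElem?_range hi,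
        List.getElem?_eq_getElem hi', DyckWord.mem_upSet, Option.map_some, Option.some.injEq]
      rcases p.toList[i].dichotomy with h | h <;> simp [h]
    · rw [List.getElem?_eq_none (by simpa using hi),
        List.getElem?_eq_none (p.two_mul_semilength_eq_length ▸ hi)]

theorem card_isDyckSet (m : ℕ) : Nat.card {S // IsDyckSet m S} = catalan m := by
  rw [Nat.card_congr (dyckSetEquiv m), Nat.card_eq_fintype_card,
    DyckWord.card_dyckWord_semilength_eq_catalan]

namespace Nat

variable {p q : ℕ → Prop} [DecidablePred p] [DecidablePred q]

lemma count_congr (h : ∀ x, p x ↔ q x) (t : ℕ) : count p t = count q t := by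
  simp only [count_eq_card_filter_range, h]

lemma count_and_add_count_and_not (t : ℕ) :
    count (fun x => p x ∧ q x) t + count (fun x => p x ∧ ¬q x) t = count p t := by
  induction t with
  | zero => simp
  | succ t ih =>
    simp only [count_succ]
    by_cases hp : p t <;> by_cases hq : q t <;> simp [hp, hq] <;> omega

lemma count_not_add_count (t : ℕ) : count (fun x => ¬p x) t + count p t = t := by
  conv_rhs => rw [← count_true t, ← count_and_add_count_and_not (q := fun x => ¬p x)]
  simp only [true_and, not_not]

lemma exists_le_count_eq {N i : ℕ} (h : i ≤ count p N) : ∃ t ≤ N, count p t = i := by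
  induction N with
  | zero => exact ⟨0, le_rfl, by rw [count_zero] at h ⊢; omega⟩
  | succ N ih =>
    rcases le_or_gt i (count p N) with hi | hi
    · obtain ⟨t, ht, rfl⟩ := ih hi
      exact ⟨t, ht.trans N.le_succ, rfl⟩
    · refine ⟨N + 1, le_rfl, le_antisymm ?_ h⟩
      rw [count_succ] at h ⊢
      split_ifs at h ⊢ <;> omega

lemma count_mem_image_count {T : Finset ℕ} (hT : ∀ x ∈ T, p x) (t : ℕ) :
    count (· ∈ T.image (count p)) (count p t) = count (· ∈ T) t := by
  induction t with
  | zero => simp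
  | succ t ih =>
    rw [count_succ p, count_succ (· ∈ T)]
    by_cases ht : p t
    · have hmem : count p t ∈ T.image (count p) ↔ t ∈ T := by
        refine ⟨fun h => ?_, mem_image_of_mem _⟩
        obtain ⟨x, hx, hxt⟩ := mem_image.1 h
        exact count_injective (hT x hx) ht hxt ▸ hx
      simp only [if_pos ht, count_succ, ih, hmem]
    · simp only [if_neg ht, if_neg fun h => ht (hT t h), add_zero, ih]

end Nat

section Contraction

variable {n : ℕ} {Q S S' : Finset ℕ}

def pairSupport (Q : Finset ℕ) : Finset ℕ := Q ∪ Q.image (· + 2)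

/-- Delete the letters at `pairSupport Q` and close the gaps. -/
def contract (Q S : Finset ℕ) : Finset ℕ :=
  (S \ pairSupport Q).image (Nat.count (· ∉ pairSupport Q))

/-- Spread `S'` over the positions outside `pairSupport Q` and add up-steps at `Q`. -/
noncomputable def expand (Q S' : Finset ℕ) : Finset ℕ :=
  Q ∪ S'.image (Nat.nth (· ∉ pairSupport Q))

lemma infinite_notMem_pairSupport (Q : Finset ℕ) : (Set.ofPred (· ∉ pairSupport Q)).Infinite :=
  (pairSupport Q).finite_toSet.infinite_compl

lemma nth_notMem_pairSupport (i : ℕ) : Nat.nth (· ∉ pairSupport Q) i ∉ pairSupport Q :=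
  Nat.nth_mem_of_infinite (infinite_notMem_pairSupport Q) i

lemma image_count_image_nth :
    (S'.image (Nat.nth (· ∉ pairSupport Q))).image (Nat.count (· ∉ pairSupport Q)) = S' := by
  rw [image_image]
  convert image_id (s := S')
  exact funext (Nat.count_nth_of_infinite (infinite_notMem_pairSupport Q))

lemma count_mem_image_add_two (Q : Finset ℕ) (t : ℕ) :
    Nat.count (· ∈ Q.image (· + 2)) (t + 2) = Nat.count (· ∈ Q) t := by
  rw [add_comm, Nat.count_add, Nat.count_iff_forall_not.2 (by simp; omega), zero_add]
  exact Nat.count_congr (fun k => by simp [add_comm]) t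

lemma count_mem_pairSupport (hQsep : ∀ q ∈ Q, q + 2 ∉ Q) (t : ℕ) :
    Nat.count (· ∈ pairSupport Q) t
      = Nat.count (· ∈ Q) t + Nat.count (· ∈ Q.image (· + 2)) t := by
  rw [← Nat.count_and_add_count_and_not (q := (· ∈ Q))]
  congr 1 <;> refine Nat.count_congr (fun x => ?_) t
  · simp +contextual [pairSupport]
  · simp only [pairSupport, mem_union, mem_image]
    constructor
    · rintro ⟨h | h, hx⟩
      exacts [absurd h hx, h]
    · rintro ⟨q, hq, rfl⟩
      exact ⟨Or.inr ⟨q, hq, rfl⟩, hQsep q hq⟩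

lemma subset_range_of_add_two_lt (hQ : ∀ q ∈ Q, q + 2 < 2 * n) : Q ⊆ range (2 * n) :=
  fun q hq => mem_range.2 (by have := hQ q hq; omega)

lemma count_notMem_pairSupport_two_mul (hQ : ∀ q ∈ Q, q + 2 < 2 * n)
    (hQsep : ∀ q ∈ Q, q + 2 ∉ Q) :
    Nat.count (· ∉ pairSupport Q) (2 * n) = 2 * (n - #Q) ∧ #Q ≤ n := by
  have hQr := subset_range_of_add_two_lt hQ
  have hQ2r : Q.image (· + 2) ⊆ range (2 * n) := by simpa [subset_iff] using hQ
  have := Nat.count_not_add_count (p := (· ∈ pairSupport Q)) (2 * n)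
  rw [count_mem_pairSupport hQsep, Nat.count_mem_eq_card_of_subset_range hQr,
    Nat.count_mem_eq_card_of_subset_range hQ2r,
    card_image_of_injective _ (add_left_injective 2)] at this
  omega

/-- Deleting an up-step at `q` together with the down-step at `q + 2` keeps every prefix of a
Dyck path nonnegative. -/
lemma add_count_le_two_mul_count (hQ : ∀ q ∈ Q, q + 2 < 2 * n) (hS : IsDyckSet n S)
    (hQS : Q ⊆ S) (hQS2 : ∀ q ∈ Q, q + 2 ∉ S) {t : ℕ} (ht : t ≤ 2 * n) :
    t + Nat.count (· ∈ Q) t ≤ 2 * Nat.count (· ∈ S) t + Nat.count (· ∈ Q.image (· + 2)) t := by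
  obtain ⟨-, -, hD⟩ := hS
  match t, ht with
  | 0, _ => simp
  | 1, ht =>
    have h1 := hD 1 ht
    by_cases h0 : 0 ∈ Q
    · simp [Nat.count_succ, h0, hQS h0]
    · simp [Nat.count_succ, h0] at h1 ⊢
      omega
  | s + 2, ht =>
    rw [count_mem_image_add_two]
    have hs := hD s (by omega)
    have hs1 := hD (s + 1) (by omega)
    have hs2 := hD (s + 2) ht
    have hs3 (hq : s ∈ Q) := hD (s + 3) (by have := hQ s hq; omega)
    have hQS0 := @hQS s
    have hQS1 := @hQS (s + 1)
    have hQS2s := hQS2 s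
    simp only [Nat.count_succ] at hs1 hs2 hs3 ⊢
    -- when `s ∈ Q`, the letter at `s + 2` is a down-step and the Dyck condition at `s + 3` decides
    split_ifs at hs1 hs2 hs3 hQS0 hQS1 hQS2s ⊢ <;> simp_all <;> omega

lemma count_mem_eq_count_sdiff_add (hQS : Q ⊆ S) (hQS2 : ∀ q ∈ Q, q + 2 ∉ S) (t : ℕ) :
    Nat.count (· ∈ S) t = Nat.count (· ∈ S \ pairSupport Q) t + Nat.count (· ∈ Q) t := by
  rw [← Nat.count_and_add_count_and_not (q := (· ∉ pairSupport Q))]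
  congr 1 <;> refine Nat.count_congr (fun x => ?_) t
  · simp
  · simp only [pairSupport, not_not, mem_union, mem_image]
    constructor
    · rintro ⟨hx, hq | ⟨q, hq, rfl⟩⟩
      exacts [hq, absurd hx (hQS2 q hq)]
    · exact fun hx => ⟨hQS hx, Or.inl hx⟩

lemma count_mem_contract (t : ℕ) :
    Nat.count (· ∈ contract Q S) (Nat.count (· ∉ pairSupport Q) t)
      = Nat.count (· ∈ S \ pairSupport Q) t :=
  Nat.count_mem_image_count (fun _ hx => (mem_sdiff.1 hx).2) t

lemma count_mem_expand (t : ℕ) :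
    Nat.count (· ∈ expand Q S') t
      = Nat.count (· ∈ Q) t + Nat.count (· ∈ S') (Nat.count (· ∉ pairSupport Q) t) := by
  rw [← Nat.count_and_add_count_and_not (q := (· ∈ Q))]
  congr 1
  · exact Nat.count_congr (fun x => by simp +contextual [expand]) t
  · have hT : ∀ x ∈ S'.image (Nat.nth (· ∉ pairSupport Q)), x ∉ pairSupport Q := by
      simp only [mem_image]
      rintro _ ⟨i, -, rfl⟩
      exact nth_notMem_pairSupport i
    conv_rhs => rw [← image_count_image_nth (S' := S'), Nat.count_mem_image_count hT t]
    refine Nat.count_congr (fun x => ?_) t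
    simp only [expand, mem_union]
    constructor
    · rintro ⟨hx | hx, hxQ⟩
      exacts [absurd hx hxQ, hx]
    · exact fun hx => ⟨Or.inr hx, fun hxQ => hT x hx (mem_union_left _ hxQ)⟩

lemma isDyckSet_contract (hQ : ∀ q ∈ Q, q + 2 < 2 * n) (hQsep : ∀ q ∈ Q, q + 2 ∉ Q)
    (hS : IsDyckSet n S) (hQS : Q ⊆ S) (hQS2 : ∀ q ∈ Q, q + 2 ∉ S) :
    IsDyckSet (n - #Q) (contract Q S) := by
  obtain ⟨hc2n, hQn⟩ := count_notMem_pairSupport_two_mul hQ hQsep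
  have hQr := subset_range_of_add_two_lt hQ
  have hsub : contract Q S ⊆ range (2 * (n - #Q)) := by
    simp only [contract, subset_iff, mem_image, mem_sdiff, mem_range]
    rintro _ ⟨x, ⟨hxS, hxF⟩, rfl⟩
    exact hc2n ▸ Nat.count_strict_mono hxF (mem_range.1 (hS.1 hxS))
  refine ⟨hsub, ?_, fun i hi => ?_⟩
  · have := count_mem_eq_count_sdiff_add hQS hQS2 (2 * n)
    rw [hS.count_eq, Nat.count_mem_eq_card_of_subset_range hQr, ← count_mem_contract, hc2n,
      Nat.count_mem_eq_card_of_subset_range hsub] at this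
    omega
  · obtain ⟨t, ht, rfl⟩ := Nat.exists_le_count_eq (hc2n ▸ hi)
    have hprefix := add_count_le_two_mul_count hQ hS hQS hQS2 ht
    have hfree := Nat.count_not_add_count (p := (· ∈ pairSupport Q)) t
    have hsupp := count_mem_pairSupport hQsep t
    have hsplit := count_mem_eq_count_sdiff_add hQS hQS2 t
    rw [count_mem_contract]
    omega

lemma isDyckSet_expand (hQ : ∀ q ∈ Q, q + 2 < 2 * n) (hQsep : ∀ q ∈ Q, q + 2 ∉ Q)
    (hS' : IsDyckSet (n - #Q) S') : IsDyckSet n (expand Q S') := by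
  obtain ⟨hc2n, hQn⟩ := count_notMem_pairSupport_two_mul hQ hQsep
  have hQr := subset_range_of_add_two_lt hQ
  have hsub : expand Q S' ⊆ range (2 * n) := by
    refine union_subset hQr fun x hx => ?_
    obtain ⟨i, hi, rfl⟩ := mem_image.1 hx
    exact mem_range.2 (Nat.nth_lt_of_lt_count (hc2n ▸ mem_range.1 (hS'.1 hi)))
  refine ⟨hsub, ?_, fun t ht => ?_⟩
  · rw [← Nat.count_mem_eq_card_of_subset_range hsub, count_mem_expand, hc2n, hS'.count_eq,
      Nat.count_mem_eq_card_of_subset_range hQr]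
    omega
  · have hprefix := hS'.2.2 _ (hc2n ▸ Nat.count_monotone _ ht)
    have hfree := Nat.count_not_add_count (p := (· ∈ pairSupport Q)) t
    have hsupp := count_mem_pairSupport hQsep t
    have hshift := count_mem_image_add_two Q t
    have hmono := Nat.count_monotone (· ∈ Q.image (· + 2)) (Nat.le_add_right t 2)
    rw [count_mem_expand]
    omega

lemma add_two_notMem_expand (hQsep : ∀ q ∈ Q, q + 2 ∉ Q) : ∀ q ∈ Q, q + 2 ∉ expand Q S' := by
  intro q hq hmem
  rcases mem_union.1 hmem with h | h
  · exact hQsep q hq h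
  · obtain ⟨i, -, hi⟩ := mem_image.1 h
    exact nth_notMem_pairSupport i (hi ▸ mem_union_right Q (mem_image_of_mem (· + 2) hq))

lemma expand_contract (hQS : Q ⊆ S) (hQS2 : ∀ q ∈ Q, q + 2 ∉ S) :
    expand Q (contract Q S) = S := by
  have hnc : ((S \ pairSupport Q).image (Nat.count (· ∉ pairSupport Q))).image
      (Nat.nth (· ∉ pairSupport Q)) = S \ pairSupport Q := by
    rw [image_image]
    exact (image_congr fun x hx => Nat.nth_count (mem_sdiff.1 hx).2).trans image_id
  ext x
  rw [expand, contract, hnc, mem_union, mem_sdiff]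
  refine ⟨fun hx => hx.elim (fun h => hQS h) And.left, fun hx => ?_⟩
  by_cases hxQ : x ∈ Q
  · exact Or.inl hxQ
  · refine Or.inr ⟨hx, ?_⟩
    simp only [pairSupport, mem_union, mem_image, not_or, not_exists, not_and]
    exact ⟨hxQ, fun q hq hqx => hQS2 q hq (hqx ▸ hx)⟩

lemma contract_expand : contract Q (expand Q S') = S' := by
  have hsd : expand Q S' \ pairSupport Q = S'.image (Nat.nth (· ∉ pairSupport Q)) := by
    ext x
    simp only [expand, mem_sdiff, mem_union]
    constructor
    · rintro ⟨hx | hx, hxF⟩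
      exacts [absurd (mem_union_left _ hx) hxF, hx]
    · intro hx
      obtain ⟨i, -, rfl⟩ := mem_image.1 hx
      exact ⟨Or.inr hx, nth_notMem_pairSupport i⟩
  rw [contract, hsd, image_count_image_nth]

noncomputable def contractEquiv (hQ : ∀ q ∈ Q, q + 2 < 2 * n) (hQsep : ∀ q ∈ Q, q + 2 ∉ Q) :
    {S // IsDyckSet n S ∧ Q ⊆ S ∧ ∀ q ∈ Q, q + 2 ∉ S} ≃ {S' // IsDyckSet (n - #Q) S'} where
  toFun S := ⟨contract Q S, isDyckSet_contract hQ hQsep S.2.1 S.2.2.1 S.2.2.2⟩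
  invFun S' := ⟨expand Q S', isDyckSet_expand hQ hQsep S'.2, subset_union_left,
    add_two_notMem_expand hQsep⟩
  left_inv S := Subtype.ext (expand_contract S.2.2.1 S.2.2.2)
  right_inv _ := Subtype.ext contract_expand

end Contraction

namespace Finset

variable {α β : Type*} [LinearOrder α] [LinearOrder β]

lemma exists_orderEmbOfFin_eq {s : Finset α} {x : α} (hx : x ∈ s) :
    ∃ i, s.orderEmbOfFin rfl i = x := by
  rwa [← Set.mem_range, range_orderEmbOfFin]

lemma card_filter_lt_orderEmbOfFin (s : Finset α) {k : ℕ} (h : #s = k) (i : Fin k) :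
    #{x ∈ s | x < s.orderEmbOfFin h i} = i := by
  have : {x ∈ s | x < s.orderEmbOfFin h i} = (Iio i).map (s.orderEmbOfFin h).toEmbedding := by
    ext x
    simp only [mem_filter, mem_map, mem_Iio, RelEmbedding.coe_toEmbedding]
    constructor
    · rintro ⟨hx, hlt⟩
      obtain ⟨j, rfl⟩ : x ∈ Set.range (s.orderEmbOfFin h) := by rwa [range_orderEmbOfFin]
      exact ⟨j, (s.orderEmbOfFin h).lt_iff_lt.1 hlt, rfl⟩
    · rintro ⟨j, hj, rfl⟩
      exact ⟨orderEmbOfFin_mem s h j, (s.orderEmbOfFin h).lt_iff_lt.2 hj⟩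
  rw [this, card_map, Fin.card_Iio]

lemma orderEmbOfFin_lt_iff (s : Finset α) {k : ℕ} (h : #s = k) (i : Fin k) (c : α) :
    s.orderEmbOfFin h i < c ↔ (i : ℕ) < #{x ∈ s | x < c} := by
  constructor
  · intro hc
    have hsub : insert (s.orderEmbOfFin h i) {x ∈ s | x < s.orderEmbOfFin h i}
        ⊆ {x ∈ s | x < c} := by
      refine insert_subset (mem_filter.2 ⟨orderEmbOfFin_mem s h i, hc⟩) ?_
      exact monotone_filter_right s fun x _ (hx : x < _) => hx.trans hc
    have := card_le_card hsub
    rwa [card_insert_of_notMem (by simp), card_filter_lt_orderEmbOfFin] at this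
  · intro hc
    by_contra hle
    have := card_le_card
      (monotone_filter_right s fun x _ (hx : x < c) => hx.trans_le (not_lt.1 hle))
    rw [card_filter_lt_orderEmbOfFin] at this
    omega

lemma apply_orderEmbOfFin_of_strictMonoOn {s : Finset α} {t : Finset β} (h : #s = #t)
    {f : α → β} (hf : ∀ x ∈ s, f x ∈ t) (hmono : StrictMonoOn f s) (i : Fin #s) :
    f (s.orderEmbOfFin rfl i) = t.orderEmbOfFin h.symm i := by
  refine congrFun (orderEmbOfFin_unique h.symm (f := f ∘ s.orderEmbOfFin rfl)
    (fun j => hf _ (orderEmbOfFin_mem s rfl j)) fun j k hjk => ?_) i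
  exact hmono (orderEmbOfFin_mem s rfl j) (orderEmbOfFin_mem s rfl k)
    ((s.orderEmbOfFin rfl).strictMono hjk)

variable [Fintype α] {s t : Finset α} {h : #s = #t}

lemma card_compl_eq_card_compl (h : #s = #t) : #tᶜ = #sᶜ := by
  rw [card_compl, card_compl, h]

/-- The permutation mapping `s` increasingly onto `t` and `sᶜ` increasingly onto `tᶜ`. -/
def piecewiseMonoPerm (s t : Finset α) (h : #s = #t) : Perm α :=
  subtypeCongr ((s.orderIsoOfFin rfl).symm.trans (t.orderIsoOfFin h.symm)).toEquiv
    ((subtypeEquivRight fun _ => mem_compl).symm.trans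
      (((sᶜ.orderIsoOfFin rfl).symm.trans
        (tᶜ.orderIsoOfFin (card_compl_eq_card_compl h))).toEquiv.trans
        (subtypeEquivRight fun _ => mem_compl)))

lemma piecewiseMonoPerm_orderEmbOfFin (i : Fin #s) :
    piecewiseMonoPerm s t h (s.orderEmbOfFin rfl i) = t.orderEmbOfFin h.symm i := by
  have hx := orderEmbOfFin_mem s rfl i
  have hi : (⟨_, hx⟩ : s) = s.orderIsoOfFin rfl i := Subtype.ext (coe_orderIsoOfFin_apply ..).symm
  simp [piecewiseMonoPerm, subtypeCongr, hx, hi]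

lemma piecewiseMonoPerm_orderEmbOfFin_compl (i : Fin #sᶜ) :
    piecewiseMonoPerm s t h (sᶜ.orderEmbOfFin rfl i)
      = tᶜ.orderEmbOfFin (card_compl_eq_card_compl h) i := by
  have hx := orderEmbOfFin_mem sᶜ rfl i
  simp only [piecewiseMonoPerm, subtypeCongr, trans_apply, sumCompl_symm_apply_of_neg
    (mem_compl.1 hx), sumCongr_apply, Sum.map_inr, sumCompl_apply_inr]
  rw [show (subtypeEquivRight _).symm _ = sᶜ.orderIsoOfFin rfl i from Subtype.ext ?_]
  · simp
  · simp [coe_orderIsoOfFin_apply]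

lemma piecewiseMonoPerm_lt_iff_of_mem {x : α} (hx : x ∈ s) (c : α) :
    piecewiseMonoPerm s t h x < c ↔ #{y ∈ s | y < x} < #{z ∈ t | z < c} := by
  obtain ⟨i, rfl⟩ := exists_orderEmbOfFin_eq hx
  rw [piecewiseMonoPerm_orderEmbOfFin, orderEmbOfFin_lt_iff, card_filter_lt_orderEmbOfFin]

lemma piecewiseMonoPerm_lt_iff_of_notMem {x : α} (hx : x ∉ s) (c : α) :
    piecewiseMonoPerm s t h x < c ↔ #{y ∈ sᶜ | y < x} < #{z ∈ tᶜ | z < c} := by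
  obtain ⟨i, rfl⟩ := exists_orderEmbOfFin_eq (mem_compl.2 hx)
  rw [piecewiseMonoPerm_orderEmbOfFin_compl, orderEmbOfFin_lt_iff, card_filter_lt_orderEmbOfFin]

lemma image_piecewiseMonoPerm : s.image (piecewiseMonoPerm s t h) = t := by
  calc s.image (piecewiseMonoPerm s t h)
      = (univ.image (s.orderEmbOfFin rfl)).image (piecewiseMonoPerm s t h) := by
        rw [image_orderEmbOfFin_univ]
    _ = t := by
      rw [image_image]
      simp only [Function.comp_def, piecewiseMonoPerm_orderEmbOfFin]
      exact image_orderEmbOfFin_univ t _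

lemma strictMonoOn_piecewiseMonoPerm : StrictMonoOn (piecewiseMonoPerm s t h) s := by
  intro x hx y hy hxy
  obtain ⟨i, rfl⟩ := exists_orderEmbOfFin_eq (mem_coe.1 hx)
  obtain ⟨j, rfl⟩ := exists_orderEmbOfFin_eq (mem_coe.1 hy)
  simpa only [piecewiseMonoPerm_orderEmbOfFin, OrderEmbedding.lt_iff_lt] using hxy

lemma strictMonoOn_piecewiseMonoPerm_compl : StrictMonoOn (piecewiseMonoPerm s t h) ↑sᶜ := by
  intro x hx y hy hxy
  obtain ⟨i, rfl⟩ := exists_orderEmbOfFin_eq (mem_coe.1 hx)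
  obtain ⟨j, rfl⟩ := exists_orderEmbOfFin_eq (mem_coe.1 hy)
  simpa only [piecewiseMonoPerm_orderEmbOfFin_compl, OrderEmbedding.lt_iff_lt] using hxy

lemma eq_piecewiseMonoPerm {τ : Perm α} (hτ : ∀ x ∈ s, τ x ∈ t)
    (hs : StrictMonoOn τ s) (hsc : StrictMonoOn τ ↑sᶜ) : τ = piecewiseMonoPerm s t h := by
  have himage : s.image τ = t :=
    eq_of_subset_of_card_le (fun _ hy => by obtain ⟨x, hx, rfl⟩ := mem_image.1 hy; exact hτ x hx)
      (by rw [card_image_of_injective _ τ.injective, h])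
  have hτc (x : α) (hx : x ∈ sᶜ) : τ x ∈ tᶜ := by
    refine mem_compl.2 fun hxt => mem_compl.1 hx ?_
    obtain ⟨y, hy, hyx⟩ := mem_image.1 (himage ▸ hxt)
    exact τ.injective hyx ▸ hy
  ext x
  by_cases hx : x ∈ s
  · obtain ⟨i, rfl⟩ := exists_orderEmbOfFin_eq hx
    rw [piecewiseMonoPerm_orderEmbOfFin, apply_orderEmbOfFin_of_strictMonoOn h hτ hs]
  · obtain ⟨i, rfl⟩ := exists_orderEmbOfFin_eq (mem_compl.2 hx)
    rw [piecewiseMonoPerm_orderEmbOfFin_compl,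
      apply_orderEmbOfFin_of_strictMonoOn (card_compl_eq_card_compl h).symm hτc hsc]

end Finset

namespace Fin

lemma card_filter_lt_add_card_compl_filter_lt {n : ℕ} (s : Finset (Fin n)) (e : Fin n) :
    #{y ∈ s | y < e} + #{y ∈ sᶜ | y < e} = e := by
  rw [← Fin.card_Iio e, ← card_filter_add_card_filter_not (s := Iio e) (· ∈ s)]
  congr 2 <;> ext <;> simp [and_comm]

lemma card_filter_le_eq {n : ℕ} (s : Finset (Fin n)) (e : Fin n) :
    #{y ∈ s | y ≤ e} = #{y ∈ s | y < e} + if e ∈ s then 1 else 0 := by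
  have : {y ∈ s | y ≤ e} = {y ∈ s | y < e} ∪ {y ∈ s | y = e} := by
    ext; simp [le_iff_lt_or_eq, and_or_left]
  rw [this, card_union_of_disjoint (disjoint_filter.2 fun _ _ h h' => h.ne h'), filter_eq']
  split_ifs <;> simp

end Fin

section PairWord

variable {n : ℕ} {P W : Finset (Fin n)}

def pairWord (P W : Finset (Fin n)) : Finset ℕ :=
  P.image (fun p : Fin n => 2 * (p : ℕ)) ∪ Wᶜ.image (fun w : Fin n => 2 * (w : ℕ) + 1)

lemma two_mul_mem_pairWord (p : Fin n) : 2 * (p : ℕ) ∈ pairWord P W ↔ p ∈ P := by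
  simp only [pairWord, mem_union, mem_image, mem_compl]
  constructor
  · rintro (⟨q, hq, hqp⟩ | ⟨w, -, hw⟩)
    · rwa [show q = p from Fin.ext (by omega)] at hq
    · omega
  · exact fun hp => Or.inl ⟨p, hp, rfl⟩

lemma two_mul_add_one_mem_pairWord (w : Fin n) : 2 * (w : ℕ) + 1 ∈ pairWord P W ↔ w ∉ W := by
  simp only [pairWord, mem_union, mem_image, mem_compl]
  constructor
  · rintro (⟨q, -, hq⟩ | ⟨v, hv, hvw⟩)
    · omega
    · rwa [show v = w from Fin.ext (by omega)] at hv
  · exact fun hw => Or.inr ⟨w, hw, rfl⟩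

lemma pairWord_subset_range : pairWord P W ⊆ range (2 * n) := by
  refine union_subset ?_ ?_ <;> intro x hx <;> obtain ⟨y, -, rfl⟩ := mem_image.1 hx <;>
    exact mem_range.2 (by have := y.2; omega)

lemma disjoint_image_two_mul (A B : Finset (Fin n)) :
    Disjoint (A.image fun p : Fin n => 2 * (p : ℕ)) (B.image fun w : Fin n => 2 * (w : ℕ) + 1) := by
  simp only [disjoint_left, mem_image]
  rintro _ ⟨a, -, rfl⟩ ⟨b, -, h⟩
  omega

lemma card_pairWord : #(pairWord P W) + #W = #P + n := by
  have hW : #W ≤ n := by simpa using card_le_univ W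
  rw [pairWord, card_union_of_disjoint (disjoint_image_two_mul _ _),
    card_image_of_injective _ fun a b h => Fin.ext (by omega),
    card_image_of_injective _ fun a b h => Fin.ext (by simp at h; omega), card_compl,
    Fintype.card_fin]
  omega

lemma count_mem_pairWord_two_mul (e : Fin n) :
    Nat.count (· ∈ pairWord P W) (2 * e) + #{w ∈ W | w < e} = #{p ∈ P | p < e} + e := by
  have hfilter : {x ∈ range (2 * e) | x ∈ pairWord P W}
      = (pairWord P W).filter (· < 2 * (e : ℕ)) := by
    ext; simp [and_comm]
  have h2 (p : Fin n) : 2 * (p : ℕ) < 2 * e ↔ p < e := by rw [Fin.lt_def]; omega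
  have h2' (p : Fin n) : 2 * (p : ℕ) + 1 < 2 * e ↔ p < e := by rw [Fin.lt_def]; omega
  rw [Nat.count_eq_card_filter_range, hfilter, pairWord, filter_union, filter_image, filter_image,
    card_union_of_disjoint (disjoint_image_two_mul _ _),
    card_image_of_injective _ fun a b h => Fin.ext (by omega),
    card_image_of_injective _ fun a b h => Fin.ext (by simp at h; omega)]
  simp only [h2, h2']
  have := Fin.card_filter_lt_add_card_compl_filter_lt W e
  omega

lemma count_mem_pairWord_two_mul_add_one (e : Fin n) :
    Nat.count (· ∈ pairWord P W) (2 * e + 1) + #{w ∈ W | w < e} = #{p ∈ P | p ≤ e} + e := by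
  have := count_mem_pairWord_two_mul (P := P) (W := W) e
  rw [Nat.count_succ, Fin.card_filter_le_eq]
  simp only [two_mul_mem_pairWord]
  omega

theorem isDyckSet_pairWord_iff :
    IsDyckSet n (pairWord P W) ↔ #P = #W ∧ (∀ e : Fin n, #{w ∈ W | w < e} ≤ #{p ∈ P | p < e}) ∧
      ∀ e : Fin n, #{w ∈ W | w < e} < #{p ∈ P | p ≤ e} := by
  have hcard := card_pairWord (P := P) (W := W)
  constructor
  · rintro ⟨-, hS, hD⟩
    refine ⟨by omega, fun e => ?_, fun e => ?_⟩
    · have := hD (2 * e) (by omega)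
      have := count_mem_pairWord_two_mul (P := P) (W := W) e
      omega
    · have := hD (2 * e + 1) (by omega)
      have := count_mem_pairWord_two_mul_add_one (P := P) (W := W) e
      omega
  · rintro ⟨hballot, heven, hodd⟩
    refine ⟨pairWord_subset_range, by omega, fun t ht => ?_⟩
    obtain ⟨e, rfl | rfl⟩ := Nat.even_or_odd' t
    · rcases lt_or_eq_of_le (show e ≤ n by omega) with he | rfl
      · have := heven ⟨e, he⟩
        have := count_mem_pairWord_two_mul (P := P) (W := W) ⟨e, he⟩
        simp only at this
        omega
      · rw [Nat.count_mem_eq_card_of_subset_range pairWord_subset_range]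
        omega
    · have := hodd ⟨e, by omega⟩
      have := count_mem_pairWord_two_mul_add_one (P := P) (W := W) ⟨e, by omega⟩
      simp only at this
      omega

end PairWord

section LeftToRightMinima

variable {n : ℕ} {π : Perm (Fin n)}

def lrMinPos (π : Perm (Fin n)) : Finset (Fin n) := {p | ∀ q < p, π p < π q}

lemma mem_lrMinPos {p : Fin n} : p ∈ lrMinPos π ↔ ∀ q < p, π p < π q := by
  simp [lrMinPos]

def lrMinRevVal (π : Perm (Fin n)) : Finset (Fin n) := (lrMinPos π).image fun p => (π p).rev

lemma injective_rev_apply (π : Perm (Fin n)) : Function.Injective fun p => (π p).rev :=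
  Fin.rev_injective.comp π.injective

def dyckSetOfPerm (π : Perm (Fin n)) : Finset ℕ := pairWord (lrMinPos π) (lrMinRevVal π)

/-- The `e + 1` distinct values `π 0, …, π e` all lie in `[v, n)`. -/
lemma le_rev_of_forall_le {e v : Fin n} (h : ∀ q ≤ e, v ≤ π q) : e ≤ v.rev := by
  have hsub : (Iic e).image π ⊆ Ici v := by
    simpa [subset_iff] using h
  have := card_le_card hsub
  rw [card_image_of_injective _ π.injective, Fin.card_Iic, Fin.card_Ici] at this
  rw [Fin.le_def, Fin.val_rev]
  omega

lemma le_rev_of_mem_lrMinPos {p : Fin n} (hp : p ∈ lrMinPos π) : p ≤ (π p).rev :=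
  le_rev_of_forall_le fun q hq => hq.lt_or_eq.elim (fun h => (mem_lrMinPos.1 hp q h).le)
    (fun h => h ▸ le_rfl)

/-- Take the position of the minimum of `π` on `[0, e]`. -/
lemma exists_mem_lrMinPos_le_le_rev (e : Fin n) : ∃ p ∈ lrMinPos π, p ≤ e ∧ e ≤ (π p).rev := by
  obtain ⟨p, hpe, hmin⟩ := (Iic e).exists_min_image π ⟨e, mem_Iic.2 le_rfl⟩
  simp only [mem_Iic] at hpe hmin
  refine ⟨p, mem_lrMinPos.2 fun q hq => ?_, hpe, le_rev_of_forall_le hmin⟩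
  exact (hmin q (hq.le.trans hpe)).lt_of_ne (π.injective.ne hq.ne')

lemma card_filter_lrMinRevVal_lt (e : Fin n) :
    #{w ∈ lrMinRevVal π | w < e} = #{p ∈ lrMinPos π | (π p).rev < e} := by
  rw [lrMinRevVal, filter_image, card_image_of_injective _ (injective_rev_apply π)]

theorem isDyckSet_dyckSetOfPerm (π : Perm (Fin n)) : IsDyckSet n (dyckSetOfPerm π) := by
  refine isDyckSet_pairWord_iff.2 ⟨?_, fun e => ?_, fun e => ?_⟩
  · rw [lrMinRevVal, card_image_of_injective _ (injective_rev_apply π)]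
  · rw [card_filter_lrMinRevVal_lt]
    exact card_le_card (monotone_filter_right _ fun p hp hpe =>
      (le_rev_of_mem_lrMinPos hp).trans_lt hpe)
  · rw [card_filter_lrMinRevVal_lt]
    obtain ⟨p, hp, hpe, hep⟩ := exists_mem_lrMinPos_le_le_rev (π := π) e
    refine card_lt_card ⟨monotone_filter_right _ fun q hq hqe =>
      ((le_rev_of_mem_lrMinPos hq).trans_lt hqe).le, fun hsub => ?_⟩
    exact (mem_filter.1 (hsub (mem_filter.2 ⟨hp, hpe⟩))).2.not_ge hep

end LeftToRightMinima

section Reconstruction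

variable {n : ℕ} {P W : Finset (Fin n)} {h : #P = #W}

/-- The inverse of `π ↦ (lrMinPos π, lrMinRevVal π)` on `123`-avoiding permutations. -/
def permOfPair (P W : Finset (Fin n)) (h : #P = #W) : Perm (Fin n) :=
  (piecewiseMonoPerm P W h).trans Fin.revPerm

lemma permOfPair_apply (x : Fin n) : permOfPair P W h x = (piecewiseMonoPerm P W h x).rev := rfl

variable (hballot : ∀ e : Fin n, #{w ∈ W | w < e} < #{p ∈ P | p ≤ e})
include hballot

lemma piecewiseMonoPerm_lt_self {x : Fin n} (hx : x ∉ P) : piecewiseMonoPerm P W h x < x := by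
  have := hballot x
  have := Fin.card_filter_lt_add_card_compl_filter_lt P x
  have := Fin.card_filter_lt_add_card_compl_filter_lt W x
  rw [Fin.card_filter_le_eq, if_neg hx] at *
  rw [piecewiseMonoPerm_lt_iff_of_notMem hx]
  omega

lemma le_piecewiseMonoPerm {p x : Fin n} (hp : p ∈ P) (hxp : x < p) :
    x ≤ piecewiseMonoPerm P W h p := by
  have := hballot x
  have : #{y ∈ P | y ≤ x} ≤ #{y ∈ P | y < p} :=
    card_le_card (monotone_filter_right _ fun y _ hy => hy.trans_lt hxp)
  rw [← not_lt, piecewiseMonoPerm_lt_iff_of_mem hp]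
  omega

lemma exists_lt_le_piecewiseMonoPerm {x : Fin n} (hx : x ∉ P) :
    ∃ p ∈ P, p < x ∧ x ≤ piecewiseMonoPerm P W h p := by
  have hlt := hballot x
  rw [Fin.card_filter_le_eq, if_neg hx, add_zero] at hlt
  have hi : #{w ∈ W | w < x} < #P := hlt.trans_le (card_le_card (filter_subset _ _))
  refine ⟨P.orderEmbOfFin rfl ⟨_, hi⟩, orderEmbOfFin_mem _ _ _, ?_, ?_⟩
  · rwa [orderEmbOfFin_lt_iff]
  · rw [piecewiseMonoPerm_orderEmbOfFin, ← not_lt, orderEmbOfFin_lt_iff]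
    exact lt_irrefl _

lemma lrMinPos_permOfPair : lrMinPos (permOfPair P W h) = P := by
  ext x
  simp only [mem_lrMinPos, permOfPair_apply, Fin.rev_lt_rev]
  constructor
  · intro hmin
    by_contra hx
    obtain ⟨p, -, hpx, hxp⟩ := exists_lt_le_piecewiseMonoPerm hballot (h := h) hx
    exact (hmin p hpx).not_ge ((piecewiseMonoPerm_lt_self hballot hx).le.trans hxp)
  · intro hx q hqx
    by_cases hq : q ∈ P
    · exact strictMonoOn_piecewiseMonoPerm hq hx hqx
    · exact (piecewiseMonoPerm_lt_self hballot hq).trans_le (le_piecewiseMonoPerm hballot hx hqx)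

lemma avoids123_permOfPair : Avoids123 (permOfPair P W h) := by
  rintro ⟨i, j, k, hij, hjk, hv₁, hv₂⟩
  have hP := lrMinPos_permOfPair hballot (h := h)
  have hj : j ∉ P := fun hj => (mem_lrMinPos.1 (hP.symm ▸ hj : j ∈ lrMinPos _) i hij).not_gt hv₁
  have hk : k ∉ P := fun hk => (mem_lrMinPos.1 (hP.symm ▸ hk : k ∈ lrMinPos _) j hjk).not_gt hv₂
  rw [permOfPair_apply, permOfPair_apply, Fin.rev_lt_rev] at hv₂
  exact (strictMonoOn_piecewiseMonoPerm_compl (mem_compl.2 hj) (mem_compl.2 hk) hjk).not_gt hv₂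

lemma dyckSetOfPerm_permOfPair : dyckSetOfPerm (permOfPair P W h) = pairWord P W := by
  rw [dyckSetOfPerm, lrMinRevVal, lrMinPos_permOfPair hballot]
  simp only [permOfPair_apply, Fin.rev_rev, image_piecewiseMonoPerm]

end Reconstruction

section Uniqueness

variable {n : ℕ} {π : Perm (Fin n)}

lemma exists_lt_apply_lt_of_notMem_lrMinPos {x : Fin n} (hx : x ∉ lrMinPos π) :
    ∃ q < x, π q < π x := by
  simp only [mem_lrMinPos, not_forall, not_lt] at hx
  obtain ⟨q, hqx, hle⟩ := hx
  exact ⟨q, hqx, hle.lt_of_ne (π.injective.ne hqx.ne)⟩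

lemma Avoids123.apply_lt_apply_of_notMem_lrMinPos (hπ : Avoids123 π) {x y : Fin n}
    (hx : x ∉ lrMinPos π) (hxy : x < y) : π y < π x := by
  obtain ⟨q, hqx, hq⟩ := exists_lt_apply_lt_of_notMem_lrMinPos hx
  exact (lt_or_gt_of_ne (π.injective.ne hxy.ne')).resolve_right
    fun h => hπ ⟨q, x, y, hqx, hxy, hq, h⟩

lemma permOfPair_eq {P W : Finset (Fin n)} {h : #P = #W} (hπ : Avoids123 π)
    (hP : lrMinPos π = P) (hW : lrMinRevVal π = W) : permOfPair P W h = π := by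
  subst hP hW
  have hσ : piecewiseMonoPerm (lrMinPos π) (lrMinRevVal π) h = π.trans Fin.revPerm := by
    refine (eq_piecewiseMonoPerm (fun x hx => ?_) ?_ ?_).symm
    · simp only [Equiv.trans_apply, Fin.revPerm_apply, lrMinRevVal]
      exact mem_image_of_mem _ hx
    · intro x _ y hy hxy
      simpa [Fin.rev_lt_rev] using mem_lrMinPos.1 hy x hxy
    · intro x hx y _ hxy
      simpa [Fin.rev_lt_rev] using hπ.apply_lt_apply_of_notMem_lrMinPos (mem_compl.1 hx) hxy
  ext x
  simp [permOfPair_apply, hσ]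

end Uniqueness

section Bijection

variable {n : ℕ} {S : Finset ℕ} {P W : Finset (Fin n)}

def evenUps (n : ℕ) (S : Finset ℕ) : Finset (Fin n) := {p | 2 * (p : ℕ) ∈ S}

def oddDowns (n : ℕ) (S : Finset ℕ) : Finset (Fin n) := {w | 2 * (w : ℕ) + 1 ∉ S}

lemma evenUps_pairWord : evenUps n (pairWord P W) = P := by
  ext p
  simp [evenUps, two_mul_mem_pairWord]

lemma oddDowns_pairWord : oddDowns n (pairWord P W) = W := by
  ext w
  simp [oddDowns, two_mul_add_one_mem_pairWord]

lemma pairWord_evenUps_oddDowns (hS : S ⊆ range (2 * n)) :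
    pairWord (evenUps n S) (oddDowns n S) = S := by
  ext x
  by_cases hx : x < 2 * n
  · obtain ⟨e, rfl | rfl⟩ := Nat.even_or_odd' x
    · simpa [evenUps] using
        two_mul_mem_pairWord (P := evenUps n S) (W := oddDowns n S) ⟨e, by omega⟩
    · simpa [oddDowns] using
        two_mul_add_one_mem_pairWord (P := evenUps n S) (W := oddDowns n S) ⟨e, by omega⟩
  · exact iff_of_false (fun h => hx (mem_range.1 (pairWord_subset_range h)))
      (fun h => hx (mem_range.1 (hS h)))

lemma IsDyckSet.isDyckSet_pairWord (hS : IsDyckSet n S) :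
    IsDyckSet n (pairWord (evenUps n S) (oddDowns n S)) :=
  (pairWord_evenUps_oddDowns hS.1).symm ▸ hS

lemma IsDyckSet.card_evenUps (hS : IsDyckSet n S) : #(evenUps n S) = #(oddDowns n S) :=
  (isDyckSet_pairWord_iff.1 hS.isDyckSet_pairWord).1

lemma IsDyckSet.card_filter_oddDowns_lt (hS : IsDyckSet n S) (e : Fin n) :
    #{w ∈ oddDowns n S | w < e} < #{p ∈ evenUps n S | p ≤ e} :=
  (isDyckSet_pairWord_iff.1 hS.isDyckSet_pairWord).2.2 e

noncomputable def avoidersEquiv (n : ℕ) :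
    {π : Perm (Fin n) // Avoids123 π} ≃ {S // IsDyckSet n S} where
  toFun π := ⟨dyckSetOfPerm π.1, isDyckSet_dyckSetOfPerm π.1⟩
  invFun S := ⟨permOfPair (evenUps n S) (oddDowns n S) S.2.card_evenUps,
    avoids123_permOfPair S.2.card_filter_oddDowns_lt⟩
  left_inv π := by
    apply Subtype.ext
    exact permOfPair_eq π.2 evenUps_pairWord.symm oddDowns_pairWord.symm
  right_inv S := Subtype.ext ((dyckSetOfPerm_permOfPair S.2.card_filter_oddDowns_lt).trans
    (pairWord_evenUps_oddDowns S.2.1))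

end Bijection

section Ascents

variable {n : ℕ} {π : Perm (Fin n)}

lemma Avoids123.inv (hπ : Avoids123 π) : Avoids123 π⁻¹ := by
  rintro ⟨i, j, k, hij, hjk, hv₁, hv₂⟩
  exact hπ ⟨π⁻¹ i, π⁻¹ j, π⁻¹ k, hv₁, hv₂, by simpa using hij, by simpa using hjk⟩

/-- This form is symmetric in positions and values. -/
lemma mem_lrMinPos_iff_forall_not {p : Fin n} :
    p ∈ lrMinPos π ↔ ∀ q, ¬(q < p ∧ π q < π p) := by
  refine mem_lrMinPos.trans (forall_congr' fun q => ?_)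
  constructor
  · exact fun h ⟨hqp, hv⟩ => (h hqp).not_gt hv
  · exact fun h hqp => (lt_or_gt_of_ne (π.injective.ne hqp.ne')).resolve_right
      fun hv => h ⟨hqp, hv⟩

lemma mem_lrMinPos_inv {v : Fin n} : v ∈ lrMinPos π⁻¹ ↔ π⁻¹ v ∈ lrMinPos π := by
  rw [mem_lrMinPos_iff_forall_not, mem_lrMinPos_iff_forall_not]
  refine ⟨fun h q ⟨hq, hv⟩ => h (π q) ⟨by simpa using hv, by simpa using hq⟩,
    fun h u ⟨hu, hv⟩ => h (π⁻¹ u) ⟨hv, by simpa using hu⟩⟩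

lemma rev_mem_lrMinRevVal {v : Fin n} : v.rev ∈ lrMinRevVal π ↔ π⁻¹ v ∈ lrMinPos π := by
  simp only [lrMinRevVal, mem_image, Fin.rev_inj]
  constructor
  · rintro ⟨p, hp, hpv⟩
    simpa [← hpv] using hp
  · exact fun h => ⟨_, h, by simp⟩

lemma Avoids123.apply_lt_apply_iff (hπ : Avoids123 π) {p q : Fin n} (hpq : (q : ℕ) = p + 1) :
    π p < π q ↔ p ∈ lrMinPos π ∧ q ∉ lrMinPos π := by
  have hlt : p < q := by rw [Fin.lt_def]; omega
  constructor
  · refine fun hv => ⟨by_contra fun hp => (hπ.apply_lt_apply_of_notMem_lrMinPos hp hlt).not_gt hv,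
      fun hq => (mem_lrMinPos.1 hq p hlt).not_gt hv⟩
  · rintro ⟨hp, hq⟩
    obtain ⟨r, hrq, hr⟩ := exists_lt_apply_lt_of_notMem_lrMinPos hq
    rcases (show r ≤ p by rw [Fin.le_def]; rw [Fin.lt_def] at hrq; omega).lt_or_eq with hrp | rfl
    exacts [(mem_lrMinPos.1 hp r hrp).trans hr, hr]

lemma isAscentAt_iff_lt {b : ℕ} (hb : b ∈ Icc 1 (n - 1)) :
    IsAscentAt π b ↔ π ⟨b - 1, by grind⟩ < π ⟨b, by grind⟩ := by
  simp only [mem_Icc] at hb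
  exact ⟨fun ⟨_, _, _, h⟩ => h, fun h => ⟨_, _, hb.1, h⟩⟩

lemma Avoids123.isAscentAt_iff (hπ : Avoids123 π) {b : ℕ} (hb : b ∈ Icc 1 (n - 1)) :
    IsAscentAt π b ↔ 2 * (b - 1) ∈ dyckSetOfPerm π ∧ 2 * (b - 1) + 2 ∉ dyckSetOfPerm π := by
  simp only [mem_Icc] at hb
  have e : 2 * (b - 1) + 2 = 2 * b := by omega
  rw [isAscentAt_iff_lt (mem_Icc.2 hb), hπ.apply_lt_apply_iff (by simp; omega), e, dyckSetOfPerm,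
    ← two_mul_mem_pairWord (W := lrMinRevVal π), ← two_mul_mem_pairWord (W := lrMinRevVal π)]

lemma Avoids123.isAscentAt_inv_iff (hπ : Avoids123 π) {a : ℕ} (ha : a ∈ Icc 1 (n - 1)) :
    IsAscentAt π⁻¹ a ↔
      2 * (n - 1 - a) + 1 ∈ dyckSetOfPerm π ∧ 2 * (n - 1 - a) + 1 + 2 ∉ dyckSetOfPerm π := by
  simp only [mem_Icc] at ha
  have e₁ : 2 * (n - 1 - a) + 1 = 2 * ((Fin.rev ⟨a, by omega⟩ : Fin n) : ℕ) + 1 := by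
    simp only [Fin.val_rev]; omega
  have e₂ : 2 * (n - 1 - a) + 1 + 2 = 2 * ((Fin.rev ⟨a - 1, by omega⟩ : Fin n) : ℕ) + 1 := by
    simp only [Fin.val_rev]; omega
  rw [isAscentAt_iff_lt (mem_Icc.2 ha), hπ.inv.apply_lt_apply_iff (by simp; omega),
    mem_lrMinPos_inv, mem_lrMinPos_inv, ← rev_mem_lrMinRevVal, ← rev_mem_lrMinRevVal,
    dyckSetOfPerm, e₂, e₁, two_mul_add_one_mem_pairWord, two_mul_add_one_mem_pairWord, not_not,
    and_comm]

end Ascents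

section Constraints

variable {n : ℕ} {A B : Finset ℕ}

/-- The ascent conditions force an up-step at each `q ∈ forcedUps n A B` and a down-step at
`q + 2`. -/
def forcedUps (n : ℕ) (A B : Finset ℕ) : Finset ℕ :=
  B.image (fun b => 2 * (b - 1)) ∪ A.image (fun a => 2 * (n - 1 - a) + 1)

lemma Avoids123.ascents_iff {π : Perm (Fin n)} (hπ : Avoids123 π)
    (hA : A ⊆ Icc 1 (n - 1)) (hB : B ⊆ Icc 1 (n - 1)) :
    ((∀ b ∈ B, IsAscentAt π b) ∧ ∀ a ∈ A, IsAscentAt π⁻¹ a) ↔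
      forcedUps n A B ⊆ dyckSetOfPerm π ∧ ∀ q ∈ forcedUps n A B, q + 2 ∉ dyckSetOfPerm π := by
  have hB' : (∀ b ∈ B, IsAscentAt π b) ↔
      ∀ b ∈ B, 2 * (b - 1) ∈ dyckSetOfPerm π ∧ 2 * (b - 1) + 2 ∉ dyckSetOfPerm π :=
    forall₂_congr fun b hb => hπ.isAscentAt_iff (hB hb)
  have hA' : (∀ a ∈ A, IsAscentAt π⁻¹ a) ↔ ∀ a ∈ A,
      2 * (n - 1 - a) + 1 ∈ dyckSetOfPerm π ∧ 2 * (n - 1 - a) + 1 + 2 ∉ dyckSetOfPerm π :=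
    forall₂_congr fun a ha => hπ.isAscentAt_inv_iff (hA ha)
  rw [hB', hA']
  simp only [forcedUps, union_subset_iff, image_subset_iff, forall_mem_union, forall_mem_image,
    forall_and]
  tauto

lemma forcedUps_add_two_lt (hA : A ⊆ Icc 1 (n - 1)) (hB : B ⊆ Icc 1 (n - 1)) :
    ∀ q ∈ forcedUps n A B, q + 2 < 2 * n := by
  simp only [forcedUps, mem_union, mem_image]
  rintro _ (⟨b, hb, rfl⟩ | ⟨a, ha, rfl⟩)
  · have := mem_Icc.1 (hB hb); omega
  · have := mem_Icc.1 (hA ha); omega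

lemma forcedUps_add_two_notMem (hA : A ⊆ Icc 1 (n - 1)) (hB : B ⊆ Icc 1 (n - 1))
    (hAsparse : ∀ a ∈ A, a + 1 ∉ A) (hBsparse : ∀ b ∈ B, b + 1 ∉ B) :
    ∀ q ∈ forcedUps n A B, q + 2 ∉ forcedUps n A B := by
  simp only [forcedUps, mem_union, mem_image]
  rintro _ (⟨b, hb, rfl⟩ | ⟨a, ha, rfl⟩) (⟨b', hb', h⟩ | ⟨a', ha', h⟩)
  · have := mem_Icc.1 (hB hb); have := mem_Icc.1 (hB hb')
    exact hBsparse b hb ((show b' = b + 1 by omega) ▸ hb')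
  · omega
  · omega
  · have := mem_Icc.1 (hA ha); have := mem_Icc.1 (hA ha')
    exact hAsparse a' ha' ((show a = a' + 1 by omega) ▸ ha)

lemma card_forcedUps (hA : A ⊆ Icc 1 (n - 1)) (hB : B ⊆ Icc 1 (n - 1)) :
    #(forcedUps n A B) = #A + #B := by
  rw [forcedUps, card_union_of_disjoint, card_image_of_injOn, card_image_of_injOn, add_comm]
  · intro a ha a' ha' h
    have := mem_Icc.1 (hA ha); have := mem_Icc.1 (hA ha')
    simp only at h
    omega
  · intro b hb b' hb' h
    have := mem_Icc.1 (hB hb); have := mem_Icc.1 (hB hb')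
    simp only at h
    omega
  · simp only [disjoint_left, mem_image]
    rintro _ ⟨b, -, rfl⟩ ⟨a, -, h⟩
    omega

end Constraints

noncomputable def constrainedAvoidersEquiv {n : ℕ} {A B : Finset ℕ} (hA : A ⊆ Icc 1 (n - 1))
    (hB : B ⊆ Icc 1 (n - 1)) :
    {π : Perm (Fin n) // Avoids123 π ∧ (∀ b ∈ B, IsAscentAt π b) ∧ ∀ a ∈ A, IsAscentAt π⁻¹ a} ≃
      {S // IsDyckSet n S ∧ forcedUps n A B ⊆ S ∧ ∀ q ∈ forcedUps n A B, q + 2 ∉ S} :=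
  (Equiv.subtypeSubtypeEquivSubtypeInter _ _).symm.trans
    (((avoidersEquiv n).subtypeEquiv fun π => π.2.ascents_iff hA hB).trans
      (Equiv.subtypeSubtypeEquivSubtypeInter _ _))

/-- For sparse subsets `A, B ⊆ [n-1]`, the number of `123`-avoiding permutations `π`
of `[n]` with `B ⊆ Asc(π)` and `A ⊆ Asc(π⁻¹)` equals the Catalan number
`C_{n - |A| - |B|}`. -/
theorem stmt_11 (n : ℕ) (A B : Finset ℕ)
    (hA : A ⊆ Finset.Icc 1 (n - 1)) (hB : B ⊆ Finset.Icc 1 (n - 1))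
    (hAsparse : ∀ a ∈ A, a + 1 ∉ A) (hBsparse : ∀ b ∈ B, b + 1 ∉ B) :
    {π : Equiv.Perm (Fin n) | Avoids123 π ∧ (∀ b ∈ B, IsAscentAt π b) ∧
        (∀ a ∈ A, IsAscentAt π⁻¹ a)}.ncard =
      catalan (n - A.card - B.card) := by
  rw [← Nat.card_coe_set_eq, Set.coe_ofPred, Nat.card_congr (constrainedAvoidersEquiv hA hB),
    Nat.card_congr (contractEquiv (forcedUps_add_two_lt hA hB)
      (forcedUps_add_two_notMem hA hB hAsparse hBsparse)),
    card_isDyckSet, card_forcedUps hA hB, Nat.sub_sub]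
end

section
/- The number of parking trees on n+1 vertices is (n!)^2. -/
/-- A parking tree on `n+1` vertices (vertices labeled by `Fin (n+1)`, the root being
vertex `0`, edges labeled by `Fin n`).  Since the plane (left-to-right) order of the
children of each vertex is determined by the labels of the connecting edges, a parking
tree is determined by: a bijection `childOf` assigning to each edge its child endpoint
(each non-root vertex is the child endpoint of exactly one edge), together with the
parent endpoint `parentOf` of each edge, subject to the increasing-labeling condition
that each parent label is smaller than the corresponding child label (this forces the
resulting graph to be a tree rooted at `0`). -/
structure ParkingTree (n : ℕ) where
  childOf : Fin n ≃ {v : Fin (n + 1) // v ≠ 0}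
  parentOf : Fin n → Fin (n + 1)
  increasing : ∀ i : Fin n, parentOf i < (childOf i).1

/-- Parking trees as a sigma type. -/
def parkingTreeEquiv (n : ℕ) :
    ParkingTree n ≃ Σ c : Fin n ≃ {v : Fin (n + 1) // v ≠ 0},
      ∀ i : Fin n, Fin ((c i).1 : Fin (n + 1)).val where
  toFun t := ⟨t.childOf, fun i => ⟨(t.parentOf i).val, t.increasing i⟩⟩
  invFun s := ⟨s.1, fun i => ⟨(s.2 i).val,
      lt_trans (s.2 i).isLt ((s.1 i).1.isLt)⟩,
    fun i => (s.2 i).isLt⟩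
  left_inv t := rfl
  right_inv s := rfl

/-- Nonzero elements of `Fin (n+1)` via `succ`. -/
def succEquiv (n : ℕ) : Fin n ≃ {v : Fin (n + 1) // v ≠ 0} where
  toFun i := ⟨i.succ, Fin.succ_ne_zero i⟩
  invFun v := v.1.pred v.2
  left_inv i := by simp
  right_inv v := by simp

theorem prod_nonzero (n : ℕ) :
    ∏ v : {v : Fin (n + 1) // v ≠ 0}, (v.1 : Fin (n + 1)).val = n.factorial := by
  rw [← Equiv.prod_comp (succEquiv n) (fun v => (v.1 : Fin (n + 1)).val)]
  simp only [succEquiv, Equiv.coe_fn_mk, Fin.val_succ]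
  rw [Fin.prod_univ_eq_prod_range (fun i => i + 1) n,
    Finset.prod_range_add_one_eq_factorial]

/-- The number of parking trees on `n+1` vertices is `(n!)²`. -/
theorem stmt_18 (n : ℕ) :
    Nat.card (ParkingTree n) = n.factorial ^ 2 := by
  rw [Nat.card_congr (parkingTreeEquiv n), Nat.card_eq_fintype_card,
    Fintype.card_sigma]
  have h : ∀ c : Fin n ≃ {v : Fin (n + 1) // v ≠ 0},
      Fintype.card (∀ i : Fin n, Fin ((c i).1 : Fin (n + 1)).val) = n.factorial := by
    intro c
    rw [Fintype.card_pi]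
    simp only [Fintype.card_fin]
    rw [Equiv.prod_comp c (fun v => (v.1 : Fin (n + 1)).val)]
    exact prod_nonzero n
  simp only [h, Finset.sum_const, smul_eq_mul, sq]
  rw [Finset.card_univ, Fintype.card_equiv (succEquiv n), Fintype.card_fin]
end
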